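/- arXiv:math/0703349 — 4 statements merged into one kernel-verified Lean document; each statement's English description precedes it below -/
import Mathlib

section
/- Let A₁, A₂ : ℝ^d → ℝ^d be positive diagonal expansive linear maps, where A_μ = diag(λ₁^{(μ)}, …, λ_d^{(μ)}) with 1 < λ₁^{(μ)} ≤ λ₂^{(μ)} ≤ … ≤ λ_d^{(μ)} for μ = 1, 2. Then 𝓔_{A₁} = 𝓔_{A₂} if and only if there exists t > 0 such that (λ_i^{(1)})^t = λ_i^{(2)} for every i = 1, …, d (i.e. A₁^t = A₂). -/
open MeasureTheory Filter Metric Topology ENNReal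

noncomputable section

/-- A linear map of `ℝ^d` is expansive if every complex eigenvalue (i.e. every complex root of
its characteristic polynomial) has absolute value greater than 1. -/
def IsExpansive {d : ℕ} (A : EuclideanSpace ℝ (Fin d) →ₗ[ℝ] EuclideanSpace ℝ (Fin d)) : Prop :=
  ∀ z : ℂ, (Polynomial.map (algebraMap ℝ ℂ) (LinearMap.charpoly A)).IsRoot z →
    1 < ‖z‖

/-- The origin is a point of `A`-density for `E`: for every `r > 0`,
`|E ∩ A⁻ʲB_r| / |A⁻ʲB_r| → 1` as `j → ∞`. -/
def HasADensityZero {d : ℕ} (A : EuclideanSpace ℝ (Fin d) →ₗ[ℝ] EuclideanSpace ℝ (Fin d))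
    (E : Set (EuclideanSpace ℝ (Fin d))) : Prop :=
  ∀ r : ℝ, 0 < r →
    Tendsto (fun j : ℕ =>
        volume (E ∩ ⇑(A ^ j) ⁻¹' ball (0 : EuclideanSpace ℝ (Fin d)) r) /
          volume (⇑(A ^ j) ⁻¹' ball (0 : EuclideanSpace ℝ (Fin d)) r))
      atTop (𝓝 1)

/-- The family `𝓔_A` of measurable sets having the origin as a point of `A`-density. -/
def densityFamily {d : ℕ} (A : EuclideanSpace ℝ (Fin d) →ₗ[ℝ] EuclideanSpace ℝ (Fin d)) :
    Set (Set (EuclideanSpace ℝ (Fin d))) :=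
  {E | MeasurableSet E ∧ HasADensityZero A E}

section Aux

variable {d : ℕ}

theorem pow_apply' (lam : Fin d → ℝ) (A : EuclideanSpace ℝ (Fin d) →ₗ[ℝ] EuclideanSpace ℝ (Fin d))
    (hA : ∀ x i, A x i = lam i * x i) (s : ℕ) (x : EuclideanSpace ℝ (Fin d)) (i : Fin d) :
    (A ^ s) x i = lam i ^ s * x i := by
  induction s with
  | zero => simp [Module.End.one_apply]
  | succ n ih =>
    have h1 : (A ^ (n+1)) x = A ((A ^ n) x) := by rw [pow_succ', Module.End.mul_apply]
    rw [h1, hA, ih, pow_succ]; ring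

theorem mem_pre' (lam : Fin d → ℝ) (A : EuclideanSpace ℝ (Fin d) →ₗ[ℝ] EuclideanSpace ℝ (Fin d))
    (hA : ∀ x i, A x i = lam i * x i) (s : ℕ) {r : ℝ} (hr : 0 < r) (x : EuclideanSpace ℝ (Fin d)) :
    x ∈ ⇑(A ^ s) ⁻¹' ball 0 r ↔ ∑ i, (lam i ^ s * x i) ^ 2 < r ^ 2 := by
  rw [Set.mem_preimage, mem_ball, dist_zero_right, EuclideanSpace.norm_eq, Real.sqrt_lt' hr]
  have : ∀ i : Fin d, ‖((A ^ s) x) i‖ ^ 2 = (lam i ^ s * x i) ^ 2 := by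
    intro i; rw [pow_apply' lam A hA, Real.norm_eq_abs, sq_abs]
  rw [Finset.sum_congr rfl fun i _ => this i]

theorem det_eq' (lam : Fin d → ℝ) (A : EuclideanSpace ℝ (Fin d) →ₗ[ℝ] EuclideanSpace ℝ (Fin d))
    (hA : ∀ x i, A x i = lam i * x i) : LinearMap.det A = ∏ i, lam i := by
  rw [← LinearMap.det_toMatrix (PiLp.basisFun 2 ℝ (Fin d)) A]
  have : (LinearMap.toMatrix (PiLp.basisFun 2 ℝ (Fin d)) (PiLp.basisFun 2 ℝ (Fin d))) A
      = Matrix.diagonal lam := by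
    ext i j
    rw [LinearMap.toMatrix_apply]
    simp only [PiLp.basisFun_apply, PiLp.basisFun_repr]
    rw [hA]
    by_cases hij : i = j <;> simp [Matrix.diagonal, hij, PiLp.ofLp_single, Pi.single_apply]
  rw [this, Matrix.det_diagonal]

theorem vol_pre' (lam : Fin d → ℝ) (hlam : ∀ i, 0 < lam i)
    (A : EuclideanSpace ℝ (Fin d) →ₗ[ℝ] EuclideanSpace ℝ (Fin d))
    (hA : ∀ x i, A x i = lam i * x i) (s : ℕ) (T : Set (EuclideanSpace ℝ (Fin d))) :
    volume (⇑(A ^ s) ⁻¹' T) = ENNReal.ofReal (((∏ i, lam i) ^ s)⁻¹) * volume T := by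
  have hprod : 0 < ∏ i, lam i := Finset.prod_pos fun i _ => hlam i
  have hdet : LinearMap.det (A ^ s) = (∏ i, lam i) ^ s := by
    rw [map_pow, det_eq' lam A hA]
  rw [Measure.addHaar_preimage_linearMap volume (by rw [hdet]; positivity) T, hdet,
    abs_of_pos (by positivity)]

theorem box_meas (I : Fin d → Set ℝ) (hI : ∀ m, MeasurableSet (I m)) :
    MeasurableSet {x : EuclideanSpace ℝ (Fin d) | ∀ m, x m ∈ I m} := by
  have heq : (⇑((MeasurableEquiv.toLp 2 (Fin d → ℝ)).symm) ⁻¹' (Set.univ.pi I))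
      = {x : EuclideanSpace ℝ (Fin d) | ∀ m, x m ∈ I m} := by
    ext x
    simp [Set.mem_pi]
  rw [← heq]
  exact ((MeasurableEquiv.toLp 2 (Fin d → ℝ)).symm).measurable (MeasurableSet.univ_pi hI)

theorem box_vol (I : Fin d → Set ℝ) (hI : ∀ m, MeasurableSet (I m)) :
    volume ({x : EuclideanSpace ℝ (Fin d) | ∀ m, x m ∈ I m}) = ∏ m, volume (I m) := by
  have h := (EuclideanSpace.volume_preserving_symm_measurableEquiv_toLp (Fin d)).measure_preimage
    (s := Set.univ.pi I) (MeasurableSet.univ_pi hI).nullMeasurableSet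
  have heq : (⇑((MeasurableEquiv.toLp 2 (Fin d → ℝ)).symm) ⁻¹' (Set.univ.pi I))
      = {x : EuclideanSpace ℝ (Fin d) | ∀ m, x m ∈ I m} := by
    ext x
    simp [Set.mem_pi]
  rw [heq] at h
  rw [h, volume_pi_pi]

theorem tendsto_ratio_iff' {α : Type*} [MeasureSpace α] (ν : ℕ → Set α) (E : Set α)
    (hE : MeasurableSet E) (h0 : ∀ n, volume (ν n) ≠ 0) (hfin : ∀ n, volume (ν n) ≠ ⊤) :
    Tendsto (fun n => volume (E ∩ ν n) / volume (ν n)) atTop (𝓝 1) ↔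
    Tendsto (fun n => volume (ν n \ E) / volume (ν n)) atTop (𝓝 0) := by
  have key : ∀ n, volume (E ∩ ν n) / volume (ν n) + volume (ν n \ E) / volume (ν n) = 1 := by
    intro n
    rw [ENNReal.div_add_div_same, Set.inter_comm, measure_inter_add_diff _ hE,
      ENNReal.div_self (h0 n) (hfin n)]
  have hr1 : ∀ n, volume (E ∩ ν n) / volume (ν n) ≤ 1 := fun n => (key n) ▸ self_le_add_right _ _
  have hd1 : ∀ n, volume (ν n \ E) / volume (ν n) ≤ 1 := fun n => (key n) ▸ self_le_add_left _ _
  have hrne : ∀ n, volume (E ∩ ν n) / volume (ν n) ≠ ⊤ :=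
    fun n => ne_top_of_le_ne_top ENNReal.one_ne_top (hr1 n)
  have hdne : ∀ n, volume (ν n \ E) / volume (ν n) ≠ ⊤ :=
    fun n => ne_top_of_le_ne_top ENNReal.one_ne_top (hd1 n)
  have hdeq : ∀ n, volume (ν n \ E) / volume (ν n) = 1 - volume (E ∩ ν n) / volume (ν n) :=
    fun n => ENNReal.eq_sub_of_add_eq (hrne n) (by rw [add_comm]; exact key n)
  have hreq : ∀ n, volume (E ∩ ν n) / volume (ν n) = 1 - volume (ν n \ E) / volume (ν n) :=
    fun n => ENNReal.eq_sub_of_add_eq (hdne n) (key n)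
  constructor
  · intro h
    rw [ENNReal.tendsto_nhds (by simp)]
    intro ε hε
    filter_upwards [(ENNReal.tendsto_nhds ENNReal.one_ne_top).1 h ε hε] with n hn
    refine ⟨by simp, ?_⟩
    rw [zero_add, hdeq n]
    calc 1 - volume (E ∩ ν n) / volume (ν n) ≤ 1 - (1 - ε) := tsub_le_tsub_left hn.1 1
      _ ≤ ε := tsub_le_iff_right.mpr le_add_tsub
  · intro h
    rw [ENNReal.tendsto_nhds ENNReal.one_ne_top]
    intro ε hε
    filter_upwards [(ENNReal.tendsto_nhds (by simp)).1 h ε hε] with n hn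
    have hn2 : volume (ν n \ E) / volume (ν n) ≤ ε := by simpa using hn.2
    refine ⟨?_, le_trans (hr1 n) le_self_add⟩
    rw [hreq n]
    exact tsub_le_tsub_left hn2 1

theorem hasDensity_mono (lam₁ lam₂ : Fin d → ℝ) (hlam₁ : ∀ i, 1 < lam₁ i) (hlam₂ : ∀ i, 1 < lam₂ i)
    (A₁ A₂ : EuclideanSpace ℝ (Fin d) →ₗ[ℝ] EuclideanSpace ℝ (Fin d))
    (hA₁ : ∀ x i, A₁ x i = lam₁ i * x i) (hA₂ : ∀ x i, A₂ x i = lam₂ i * x i)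
    (t : ℝ) (ht : 0 < t) (hpow : ∀ i, lam₁ i ^ t = lam₂ i)
    (E : Set (EuclideanSpace ℝ (Fin d))) (hE : MeasurableSet E) (h : HasADensityZero A₁ E) :
    HasADensityZero A₂ E := by
  intro r hr
  have hl₁pos : ∀ i, 0 < lam₁ i := fun i => lt_trans one_pos (hlam₁ i)
  have hl₂pos : ∀ i, 0 < lam₂ i := fun i => lt_trans one_pos (hlam₂ i)
  set P : ℕ → Set (EuclideanSpace ℝ (Fin d)) := fun s => ⇑(A₁ ^ s) ⁻¹' ball 0 r with hP
  set Q : ℕ → Set (EuclideanSpace ℝ (Fin d)) := fun j => ⇑(A₂ ^ j) ⁻¹' ball 0 r with hQ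
  set k : ℕ → ℕ := fun j => ⌊t * j⌋₊ with hk
  set W : ℝ≥0∞ := volume (ball (0 : EuclideanSpace ℝ (Fin d)) r) with hWdef
  have hW0 : W ≠ 0 := (measure_ball_pos volume 0 hr).ne'
  have hWfin : W ≠ ⊤ := measure_ball_lt_top.ne
  have hπ₁ : 0 < ∏ i, lam₁ i := Finset.prod_pos fun i _ => hl₁pos i
  have hπ₂ : 0 < ∏ i, lam₂ i := Finset.prod_pos fun i _ => hl₂pos i
  have volP : ∀ s : ℕ, volume (P s) = ENNReal.ofReal (((∏ i, lam₁ i) ^ s)⁻¹) * W :=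
    fun s => vol_pre' lam₁ hl₁pos A₁ hA₁ s _
  have volQ : ∀ j : ℕ, volume (Q j) = ENNReal.ofReal (((∏ i, lam₂ i) ^ j)⁻¹) * W :=
    fun j => vol_pre' lam₂ hl₂pos A₂ hA₂ j _
  have hP0 : ∀ s, volume (P s) ≠ 0 := by
    intro s; rw [volP s]
    exact mul_ne_zero (ENNReal.ofReal_pos.2 (by positivity)).ne' hW0
  have hPfin : ∀ s, volume (P s) ≠ ⊤ :=
    fun s => by rw [volP s]; exact ENNReal.mul_ne_top ENNReal.ofReal_ne_top hWfin
  have hQ0 : ∀ j, volume (Q j) ≠ 0 := by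
    intro j; rw [volQ j]
    exact mul_ne_zero (ENNReal.ofReal_pos.2 (by positivity)).ne' hW0
  have hQfin : ∀ j, volume (Q j) ≠ ⊤ :=
    fun j => by rw [volQ j]; exact ENNReal.mul_ne_top ENNReal.ofReal_ne_top hWfin
  have hl2j : ∀ (i : Fin d) (j : ℕ), lam₂ i ^ j = lam₁ i ^ (t * j : ℝ) := by
    intro i j
    rw [← hpow i, ← Real.rpow_natCast (lam₁ i ^ t) j, ← Real.rpow_mul (hl₁pos i).le]
  have hexp1 : ∀ (i : Fin d) (j : ℕ), lam₁ i ^ (k j) ≤ lam₂ i ^ j := by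
    intro i j
    rw [hl2j i j, ← Real.rpow_natCast (lam₁ i) (k j)]
    exact Real.rpow_le_rpow_of_exponent_le (hlam₁ i).le (Nat.floor_le (by positivity))
  have hexp2 : ∀ (i : Fin d) (j : ℕ), lam₂ i ^ j ≤ lam₁ i ^ (k j + 1) := by
    intro i j
    rw [hl2j i j, ← Real.rpow_natCast (lam₁ i) (k j + 1)]
    refine Real.rpow_le_rpow_of_exponent_le (hlam₁ i).le ?_
    push_cast
    exact (Nat.lt_floor_add_one (t * j)).le
  have hQP : ∀ j, Q j ⊆ P (k j) := by
    intro j x hx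
    rw [mem_pre' lam₂ A₂ hA₂ j hr] at hx
    rw [hP, mem_pre' lam₁ A₁ hA₁ (k j) hr]
    refine lt_of_le_of_lt (Finset.sum_le_sum fun i _ => ?_) hx
    rw [mul_pow, mul_pow]
    exact mul_le_mul_of_nonneg_right
      (pow_le_pow_left₀ (pow_pos (hl₁pos i) _).le (hexp1 i j) 2) (sq_nonneg _)
  have hPQ : ∀ j, P (k j + 1) ⊆ Q j := by
    intro j x hx
    rw [mem_pre' lam₁ A₁ hA₁ (k j + 1) hr] at hx
    rw [hQ, mem_pre' lam₂ A₂ hA₂ j hr]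
    refine lt_of_le_of_lt (Finset.sum_le_sum fun i _ => ?_) hx
    rw [mul_pow, mul_pow]
    exact mul_le_mul_of_nonneg_right
      (pow_le_pow_left₀ (pow_pos (hl₂pos i) _).le (hexp2 i j) 2) (sq_nonneg _)
  refine (tendsto_ratio_iff' Q E hE hQ0 hQfin).2 ?_
  have hPdef := (tendsto_ratio_iff' P E hE hP0 hPfin).1 (h r hr)
  have hktend : Tendsto k atTop atTop :=
    tendsto_nat_floor_atTop.comp (Tendsto.const_mul_atTop ht tendsto_natCast_atTop_atTop)
  set D : ℝ≥0∞ := ENNReal.ofReal (∏ i, lam₁ i) with hD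
  have hD0 : D ≠ 0 := (ENNReal.ofReal_pos.2 hπ₁).ne'
  have hDfin : D ≠ ⊤ := ENNReal.ofReal_ne_top
  have hmulP : ∀ s : ℕ, volume (P s) = D * volume (P (s + 1)) := by
    intro s
    rw [volP s, volP (s + 1), ← mul_assoc, hD, ← ENNReal.ofReal_mul hπ₁.le]
    congr 2
    rw [pow_succ]
    field_simp
  have bound : ∀ j, volume (Q j \ E) / volume (Q j)
      ≤ D * (volume (P (k j) \ E) / volume (P (k j))) := by
    intro j
    calc volume (Q j \ E) / volume (Q j)
        ≤ volume (P (k j) \ E) / volume (P (k j + 1)) :=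
          ENNReal.div_le_div (measure_mono (Set.diff_subset_diff_left (hQP j)))
            (measure_mono (hPQ j))
      _ = D * (volume (P (k j) \ E) / volume (P (k j))) := by
          rw [hmulP (k j), ← mul_div_assoc, ENNReal.mul_div_mul_left _ _ hD0 hDfin]
  have hmid : Tendsto (fun j => D * (volume (P (k j) \ E) / volume (P (k j)))) atTop (𝓝 0) := by
    have := ENNReal.Tendsto.const_mul (a := D) (hPdef.comp hktend) (Or.inr hDfin)
    simpa using this
  exact tendsto_of_tendsto_of_tendsto_of_le_of_le tendsto_const_nhds hmid
    (fun j => zero_le) bound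

set_option maxHeartbeats 2000000 in
theorem families_ne (hd : 1 ≤ d) (lam₁ lam₂ : Fin d → ℝ)
    (hlam₁ : ∀ i, 1 < lam₁ i) (hlam₂ : ∀ i, 1 < lam₂ i)
    (A₁ A₂ : EuclideanSpace ℝ (Fin d) →ₗ[ℝ] EuclideanSpace ℝ (Fin d))
    (hA₁ : ∀ x i, A₁ x i = lam₁ i * x i) (hA₂ : ∀ x i, A₂ x i = lam₂ i * x i)
    (hne : ¬ ∃ t : ℝ, 0 < t ∧ ∀ i, lam₁ i ^ t = lam₂ i) :
    densityFamily A₁ ≠ densityFamily A₂ := by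
  classical
  have hl1pos : ∀ m, 0 < lam₁ m := fun m => lt_trans one_pos (hlam₁ m)
  have hl2pos : ∀ m, 0 < lam₂ m := fun m => lt_trans one_pos (hlam₂ m)
  set a : Fin d → ℝ := fun m => Real.log (lam₁ m) with ha_def
  set b : Fin d → ℝ := fun m => Real.log (lam₂ m) with hb_def
  have ha : ∀ m, 0 < a m := fun m => Real.log_pos (hlam₁ m)
  have hb : ∀ m, 0 < b m := fun m => Real.log_pos (hlam₂ m)
  have hea : ∀ m, Real.exp (a m) = lam₁ m := fun m => Real.exp_log (hl1pos m)
  have heb : ∀ m, Real.exp (b m) = lam₂ m := fun m => Real.exp_log (hl2pos m)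
  -- non-parallelism of the exponent vectors
  have hnp : ∃ p q : Fin d, b p * a q ≠ b q * a p := by
    by_contra hall
    push_neg at hall
    apply hne
    refine ⟨b ⟨0, hd⟩ / a ⟨0, hd⟩, div_pos (hb _) (ha _), fun m => ?_⟩
    have hmm := hall ⟨0, hd⟩ m
    rw [Real.rpow_def_of_pos (hl1pos m)]
    have hcalc : Real.log (lam₁ m) * (b ⟨0, hd⟩ / a ⟨0, hd⟩) = b m := by
      have haz : a (⟨0, hd⟩ : Fin d) ≠ 0 := (ha _).ne'
      have hlm : Real.log (lam₁ m) = a m := rfl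
      rw [hlm]
      field_simp
      linear_combination hmm
    rw [hcalc, heb m]
  obtain ⟨p, q, hpq⟩ := hnp
  -- minimizing index
  obtain ⟨i, -, himin⟩ := Finset.exists_min_image Finset.univ (fun m => b m / a m)
    ⟨⟨0, hd⟩, Finset.mem_univ _⟩
  have hba : ∀ m, b i * a m ≤ b m * a i := fun m =>
    (div_le_div_iff₀ (ha i) (ha m)).1 (himin m (Finset.mem_univ m))
  have hstrict : ∃ m, b i * a m < b m * a i := by
    by_contra hc
    push_neg at hc
    have heqall : ∀ m, b i * a m = b m * a i := fun m => le_antisymm (hba m) (hc m)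
    apply hpq
    have hp := heqall p
    have hq := heqall q
    have h3 : b p * a q * a i = b q * a p * a i := by linear_combination a p * hq - a q * hp
    exact mul_right_cancel₀ (ha i).ne' h3
  obtain ⟨m₁, hm₁⟩ := hstrict
  set Sa : ℝ := ∑ m, a m with hSa_def
  set Sb : ℝ := ∑ m, b m with hSb_def
  have hSa : 0 < Sa := Finset.sum_pos (fun m _ => ha m) ⟨⟨0, hd⟩, Finset.mem_univ _⟩
  have hSb : 0 < Sb := Finset.sum_pos (fun m _ => hb m) ⟨⟨0, hd⟩, Finset.mem_univ _⟩
  have hδ0 : b i * Sa < a i * Sb := by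
    calc b i * Sa = ∑ m, b i * a m := by rw [hSa_def, Finset.mul_sum]
      _ < ∑ m, b m * a i := Finset.sum_lt_sum (fun m _ => hba m) ⟨m₁, Finset.mem_univ _, hm₁⟩
      _ = a i * Sb := by rw [hSb_def, ← Finset.sum_mul, mul_comm]
  set δ : ℝ := Sb - b i / a i * Sa with hδ_def
  have hδpos : 0 < δ := by
    rw [hδ_def, sub_pos, div_mul_eq_mul_div, div_lt_iff₀ (ha i)]
    linarith [hδ0]
  have hdpos : (0:ℝ) < d := by
    have h0d : 0 < d := hd
    exact_mod_cast h0d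
  -- the boxes
  set w : Fin d → ℝ := fun m => if m = i then (1:ℝ)/2 else 2 * (d:ℝ)⁻¹ with hw_def
  have hwpos : ∀ m, 0 < w m := by
    intro m; rw [hw_def]
    by_cases hmi : m = i <;> simp only [hmi, if_pos, if_true, if_neg, if_false] <;> positivity
  set C : ℝ := ∏ m, w m with hC_def
  have hC : 0 < C := Finset.prod_pos fun m _ => hwpos m
  set β : ℕ → Fin d → ℝ := fun j m => Real.exp (-((j:ℝ) * b m)) with hβ_def
  have hβpos : ∀ j m, 0 < β j m := fun j m => Real.exp_pos _
  set S : ℕ → Set (EuclideanSpace ℝ (Fin d)) := fun j =>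
    {x : EuclideanSpace ℝ (Fin d) | ∀ m, x m ∈ Set.Icc
      (if m = i then (1/2) * β j m else -((d:ℝ)⁻¹ * β j m))
      (if m = i then β j m else (d:ℝ)⁻¹ * β j m)} with hS_def
  have hSmeas : ∀ j, MeasurableSet (S j) := fun j => box_meas _ (fun m => measurableSet_Icc)
  have hlen : ∀ (j : ℕ) (m : Fin d),
      volume (Set.Icc (if m = i then (1/2) * β j m else -((d:ℝ)⁻¹ * β j m))
        (if m = i then β j m else (d:ℝ)⁻¹ * β j m)) = ENNReal.ofReal (w m * β j m) := by
    intro j m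
    rw [Real.volume_Icc]
    congr 1
    by_cases hmi : m = i <;> simp only [hw_def, hmi, if_pos, if_true, if_neg, if_false] <;> ring
  have hsumneg : ∀ j : ℕ, ∑ m, -((j:ℝ) * b m) = -((j:ℝ) * Sb) := by
    intro j
    rw [hSb_def, Finset.mul_sum, ← Finset.sum_neg_distrib]
  have volS : ∀ j, volume (S j) = ENNReal.ofReal (C * Real.exp (-((j:ℝ) * Sb))) := by
    intro j
    rw [hS_def]
    rw [box_vol _ (fun m => measurableSet_Icc)]
    rw [Finset.prod_congr rfl (fun m _ => hlen j m),
      ← ENNReal.ofReal_prod_of_nonneg (fun m _ => by positivity)]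
    congr 1
    rw [Finset.prod_mul_distrib, hC_def]
    congr 1
    rw [hβ_def, ← Real.exp_sum, hsumneg j]
  have hSfin : ∀ j, volume (S j) ≠ ⊤ := fun j => by rw [volS j]; exact ENNReal.ofReal_ne_top
  set E : Set (EuclideanSpace ℝ (Fin d)) := (⋃ j, S j)ᶜ with hE_def
  have hEmeas : MeasurableSet E := (MeasurableSet.iUnion (fun j => hSmeas j)).compl
  have hβmul : ∀ (j : ℕ) (m : Fin d), Real.exp ((j:ℝ) * b m) * β j m = 1 := by
    intro j m
    rw [hβ_def, ← Real.exp_add]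
    simp
  have hl2exp : ∀ (m : Fin d) (j : ℕ), lam₂ m ^ j = Real.exp ((j:ℝ) * b m) := by
    intro m j
    rw [Real.exp_nat_mul, heb m]
  have hl1exp : ∀ (m : Fin d) (s : ℕ), lam₁ m ^ s = Real.exp ((s:ℝ) * a m) := by
    intro m s
    rw [Real.exp_nat_mul, hea m]
  have hπ₂e : (∏ m, lam₂ m) = Real.exp Sb := by
    rw [hSb_def, Real.exp_sum]
    exact Finset.prod_congr rfl (fun m _ => (heb m).symm)
  have hπ₁e : (∏ m, lam₁ m) = Real.exp Sa := by
    rw [hSa_def, Real.exp_sum]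
    exact Finset.prod_congr rfl (fun m _ => (hea m).symm)
  -- Claim A : E does not have the origin as an A₂-density point
  have claimA : ¬ HasADensityZero A₂ E := by
    intro hAD
    have h2 : (0:ℝ) < 2 := two_pos
    set W₂ : ℝ≥0∞ := volume (ball (0 : EuclideanSpace ℝ (Fin d)) 2) with hW₂
    have hW₂0 : W₂ ≠ 0 := (measure_ball_pos volume 0 h2).ne'
    have hW₂fin : W₂ ≠ ⊤ := measure_ball_lt_top.ne
    set W₂' : ℝ := W₂.toReal with hW₂'
    have hW₂'pos : 0 < W₂' := ENNReal.toReal_pos hW₂0 hW₂fin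
    have volQ : ∀ j : ℕ, volume (⇑(A₂ ^ j) ⁻¹' ball (0 : EuclideanSpace ℝ (Fin d)) 2)
        = ENNReal.ofReal (Real.exp (-((j:ℝ) * Sb)) * W₂') := by
      intro j
      rw [vol_pre' lam₂ hl2pos A₂ hA₂ j _, hπ₂e, ← Real.exp_nat_mul, ← Real.exp_neg,
        ← hW₂, ← ENNReal.ofReal_toReal hW₂fin, ← hW₂',
        ← ENNReal.ofReal_mul (Real.exp_pos _).le]
    have hsub : ∀ j, S j ⊆ ⇑(A₂ ^ j) ⁻¹' ball (0 : EuclideanSpace ℝ (Fin d)) 2 := by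
      intro j x hx
      rw [mem_pre' lam₂ A₂ hA₂ j h2]
      have hterm : ∀ m : Fin d, (lam₂ m ^ j * x m) ^ 2
          ≤ (if m = i then (1:ℝ) else (d:ℝ)⁻¹) ^ 2 := by
        intro m
        have hxm := hx m
        have habs : |lam₂ m ^ j * x m| ≤ (if m = i then (1:ℝ) else (d:ℝ)⁻¹) := by
          rw [abs_mul, hl2exp m j, abs_of_pos (Real.exp_pos _)]
          by_cases hmi : m = i
          · rw [if_pos hmi]
            have hxu : x m ≤ β j m := by
              have h' := hxm.2; rwa [if_pos hmi] at h'
            have hxl : (1/2) * β j m ≤ x m := by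
              have h' := hxm.1; rwa [if_pos hmi] at h'
            have hxabs : |x m| ≤ β j m := by
              rw [abs_le]
              refine ⟨?_, hxu⟩
              nlinarith [hβpos j m]
            calc Real.exp ((j:ℝ) * b m) * |x m| ≤ Real.exp ((j:ℝ) * b m) * β j m :=
                  mul_le_mul_of_nonneg_left hxabs (Real.exp_pos _).le
              _ = 1 := hβmul j m
          · rw [if_neg hmi]
            have hxu : x m ≤ (d:ℝ)⁻¹ * β j m := by
              have h' := hxm.2; rwa [if_neg hmi] at h'
            have hxl : -((d:ℝ)⁻¹ * β j m) ≤ x m := by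
              have h' := hxm.1; rwa [if_neg hmi] at h'
            have hxabs : |x m| ≤ (d:ℝ)⁻¹ * β j m := abs_le.2 ⟨hxl, hxu⟩
            calc Real.exp ((j:ℝ) * b m) * |x m|
                ≤ Real.exp ((j:ℝ) * b m) * ((d:ℝ)⁻¹ * β j m) :=
                  mul_le_mul_of_nonneg_left hxabs (Real.exp_pos _).le
              _ = (d:ℝ)⁻¹ * (Real.exp ((j:ℝ) * b m) * β j m) := by ring
              _ = (d:ℝ)⁻¹ := by rw [hβmul j m, mul_one]
        calc (lam₂ m ^ j * x m) ^ 2 = |lam₂ m ^ j * x m| ^ 2 := (sq_abs _).symm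
          _ ≤ (if m = i then (1:ℝ) else (d:ℝ)⁻¹) ^ 2 :=
              pow_le_pow_left₀ (abs_nonneg _) habs 2
      have hd1 : (1:ℝ) ≤ (d:ℝ) := by exact_mod_cast hd
      have hdinv1 : (d:ℝ)⁻¹ ≤ 1 := by
        rw [← one_div, div_le_one hdpos]; exact hd1
      have hdd : (d:ℝ) * ((d:ℝ)⁻¹) ^ 2 = (d:ℝ)⁻¹ := by
        rw [sq, ← mul_assoc, mul_inv_cancel₀ hdpos.ne', one_mul]
      calc ∑ m, (lam₂ m ^ j * x m) ^ 2
          ≤ ∑ m, (if m = i then (1:ℝ) else (d:ℝ)⁻¹) ^ 2 :=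
            Finset.sum_le_sum fun m _ => hterm m
        _ = (1:ℝ) + ∑ m ∈ Finset.univ.erase i, ((d:ℝ)⁻¹) ^ 2 := by
            rw [← Finset.add_sum_erase _ _ (Finset.mem_univ i), if_pos rfl, one_pow]
            congr 1
            refine Finset.sum_congr rfl fun m hm => ?_
            rw [if_neg (Finset.ne_of_mem_erase hm)]
        _ ≤ 1 + (d:ℝ) * ((d:ℝ)⁻¹) ^ 2 := by
            rw [Finset.sum_const, nsmul_eq_mul]
            have h1 : (Finset.univ.erase i).card ≤ d := by
              refine le_trans Finset.card_erase_le ?_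
              simp
            have hcard : ((Finset.univ.erase i).card : ℝ) ≤ (d:ℝ) := by exact_mod_cast h1
            have h2' := mul_le_mul_of_nonneg_right hcard (by positivity : (0:ℝ) ≤ ((d:ℝ)⁻¹) ^ 2)
            linarith
        _ ≤ 2 := by rw [hdd]; linarith
        _ < 2 ^ 2 := by norm_num
    have hQ0 : ∀ j, volume (⇑(A₂ ^ j) ⁻¹' ball (0 : EuclideanSpace ℝ (Fin d)) 2) ≠ 0 := by
      intro j; rw [volQ j]
      exact (ENNReal.ofReal_pos.2 (by positivity)).ne'
    have hCle : C ≤ W₂' := by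
      have h0 : volume (S 0) ≤ volume (⇑(A₂ ^ 0) ⁻¹' ball (0 : EuclideanSpace ℝ (Fin d)) 2) :=
        measure_mono (hsub 0)
      rw [volS 0, volQ 0] at h0
      rw [ENNReal.ofReal_le_ofReal_iff (by positivity)] at h0
      norm_num at h0
      exact h0
    have hratio : ∀ j : ℕ,
        volume (E ∩ ⇑(A₂ ^ j) ⁻¹' ball (0 : EuclideanSpace ℝ (Fin d)) 2) /
          volume (⇑(A₂ ^ j) ⁻¹' ball (0 : EuclideanSpace ℝ (Fin d)) 2)
        ≤ ENNReal.ofReal (1 - C / W₂') := by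
      intro j
      have hsubset : E ∩ ⇑(A₂ ^ j) ⁻¹' ball (0 : EuclideanSpace ℝ (Fin d)) 2
          ⊆ (⇑(A₂ ^ j) ⁻¹' ball (0 : EuclideanSpace ℝ (Fin d)) 2) \ S j := by
        intro x hx
        exact ⟨hx.2, fun hxS => hx.1 (Set.mem_iUnion.2 ⟨j, hxS⟩)⟩
      have hdiffeq : volume ((⇑(A₂ ^ j) ⁻¹' ball (0 : EuclideanSpace ℝ (Fin d)) 2) \ S j)
          = ENNReal.ofReal (Real.exp (-((j:ℝ) * Sb)) * W₂' - C * Real.exp (-((j:ℝ) * Sb))) := by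
        rw [measure_diff (hsub j) (hSmeas j).nullMeasurableSet (hSfin j), volS j, volQ j,
          ← ENNReal.ofReal_sub _ (by positivity)]
      have hfrac : (Real.exp (-((j:ℝ) * Sb)) * W₂' - C * Real.exp (-((j:ℝ) * Sb))) /
          (Real.exp (-((j:ℝ) * Sb)) * W₂') = 1 - C / W₂' := by
        field_simp
      calc volume (E ∩ ⇑(A₂ ^ j) ⁻¹' ball (0 : EuclideanSpace ℝ (Fin d)) 2) /
            volume (⇑(A₂ ^ j) ⁻¹' ball (0 : EuclideanSpace ℝ (Fin d)) 2)
          ≤ volume ((⇑(A₂ ^ j) ⁻¹' ball (0 : EuclideanSpace ℝ (Fin d)) 2) \ S j) /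
            volume (⇑(A₂ ^ j) ⁻¹' ball (0 : EuclideanSpace ℝ (Fin d)) 2) :=
            ENNReal.div_le_div (measure_mono hsubset) le_rfl
        _ = ENNReal.ofReal (1 - C / W₂') := by
            rw [hdiffeq, volQ j, ← ENNReal.ofReal_div_of_pos (by positivity), hfrac]
    have hη1 : ENNReal.ofReal (1 - C / W₂') < 1 := by
      rw [ENNReal.ofReal_lt_one]
      have : 0 < C / W₂' := by positivity
      linarith
    obtain ⟨j, hj⟩ := ((hAD 2 h2).eventually (eventually_gt_nhds hη1)).exists
    exact absurd (hratio j) (not_le.2 hj)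
  -- Claim B : E has the origin as an A₁-density point
  have claimB : HasADensityZero A₁ E := by
    intro r hr
    set W : ℝ≥0∞ := volume (ball (0 : EuclideanSpace ℝ (Fin d)) r) with hW
    have hW0 : W ≠ 0 := (measure_ball_pos volume 0 hr).ne'
    have hWfin : W ≠ ⊤ := measure_ball_lt_top.ne
    set W' : ℝ := W.toReal with hW'
    have hW'pos : 0 < W' := ENNReal.toReal_pos hW0 hWfin
    have volF : ∀ s : ℕ, volume (⇑(A₁ ^ s) ⁻¹' ball (0 : EuclideanSpace ℝ (Fin d)) r)
        = ENNReal.ofReal (Real.exp (-((s:ℝ) * Sa)) * W') := by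
      intro s
      rw [vol_pre' lam₁ hl1pos A₁ hA₁ s _, hπ₁e, ← Real.exp_nat_mul, ← Real.exp_neg,
        ← hW, ← ENNReal.ofReal_toReal hWfin, ← hW',
        ← ENNReal.ofReal_mul (Real.exp_pos _).le]
    have hF0 : ∀ s, volume (⇑(A₁ ^ s) ⁻¹' ball (0 : EuclideanSpace ℝ (Fin d)) r) ≠ 0 := by
      intro s; rw [volF s]
      exact (ENNReal.ofReal_pos.2 (by positivity)).ne'
    have hFfin : ∀ s, volume (⇑(A₁ ^ s) ⁻¹' ball (0 : EuclideanSpace ℝ (Fin d)) r) ≠ ⊤ :=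
      fun s => by rw [volF s]; exact ENNReal.ofReal_ne_top
    refine (tendsto_ratio_iff'
      (fun s => ⇑(A₁ ^ s) ⁻¹' ball (0 : EuclideanSpace ℝ (Fin d)) r) E hEmeas hF0 hFfin).2 ?_
    rw [ENNReal.tendsto_nhds (by simp)]
    intro ε hε
    set K : ℝ := (C / W') * Real.exp (Sa / a i * Real.log (2 * r)) with hK_def
    have hKpos : 0 < K := by positivity
    set ρ : ℝ := Real.exp (-(δ / 2)) with hρ_def
    have hρpos : 0 < ρ := Real.exp_pos _
    have hρ1 : ρ < 1 := by
      rw [hρ_def]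
      calc Real.exp (-(δ / 2)) < Real.exp 0 := Real.exp_lt_exp.2 (neg_lt_zero.mpr (half_pos hδpos))
        _ = 1 := Real.exp_zero
    set QQ : ℝ≥0∞ := ENNReal.ofReal ρ with hQQ_def
    have hQQ1 : QQ < 1 := by rw [hQQ_def]; exact ENNReal.ofReal_lt_one.2 hρ1
    have hgeo : Tendsto (fun N : ℕ => (ENNReal.ofReal K * (1 - QQ)⁻¹) * QQ ^ N) atTop (𝓝 0) := by
      have hconst : ENNReal.ofReal K * (1 - QQ)⁻¹ ≠ ⊤ :=
        ENNReal.mul_ne_top ENNReal.ofReal_ne_top (ENNReal.inv_ne_top.2 (tsub_pos_of_lt hQQ1).ne')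
      have h' := ENNReal.Tendsto.const_mul (a := ENNReal.ofReal K * (1 - QQ)⁻¹)
        (ENNReal.tendsto_pow_atTop_nhds_zero_of_lt_one hQQ1) (Or.inr hconst)
      simpa using h'
    obtain ⟨N, hN⟩ : ∃ N : ℕ, (ENNReal.ofReal K * (1 - QQ)⁻¹) * QQ ^ N ≤ ε := by
      obtain ⟨N, hN⟩ := ((ENNReal.tendsto_nhds (by simp)).1 hgeo ε hε).exists
      exact ⟨N, by simpa using hN.2⟩
    obtain ⟨s₀, hs₀⟩ : ∃ s₀ : ℕ, b i * N + Real.log (2 * r) ≤ a i * s₀ := by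
      obtain ⟨s₀, hs₀'⟩ := exists_nat_ge ((b i * N + Real.log (2 * r)) / a i)
      refine ⟨s₀, ?_⟩
      rw [div_le_iff₀ (ha i)] at hs₀'
      linarith
    filter_upwards [eventually_ge_atTop s₀] with s hs
    refine ⟨by simp, ?_⟩
    rw [zero_add]
    have hFdiff : (⇑(A₁ ^ s) ⁻¹' ball (0 : EuclideanSpace ℝ (Fin d)) r) \ E
        = (⇑(A₁ ^ s) ⁻¹' ball (0 : EuclideanSpace ℝ (Fin d)) r) ∩ ⋃ j, S j := by
      rw [hE_def, Set.diff_compl]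
    have perterm : ∀ j : ℕ,
        volume ((⇑(A₁ ^ s) ⁻¹' ball (0 : EuclideanSpace ℝ (Fin d)) r) ∩ S j) /
          volume (⇑(A₁ ^ s) ⁻¹' ball (0 : EuclideanSpace ℝ (Fin d)) r)
        ≤ (ENNReal.ofReal K * QQ ^ N) * QQ ^ j := by
      intro j
      by_cases hcase : ((⇑(A₁ ^ s) ⁻¹' ball (0 : EuclideanSpace ℝ (Fin d)) r) ∩ S j) = ∅
      · rw [hcase]; simp
      · obtain ⟨x, hxF, hxS⟩ := Set.nonempty_iff_ne_empty.2 hcase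
        have hxi_lo : (1/2) * β j i ≤ x i := by
          have h' := (hxS i).1; rwa [if_pos rfl] at h'
        have hxipos : 0 < x i := lt_of_lt_of_le (by positivity) hxi_lo
        have hsq : (lam₁ i ^ s * x i) ^ 2 < r ^ 2 :=
          lt_of_le_of_lt (Finset.single_le_sum (f := fun m => (lam₁ m ^ s * x m) ^ 2)
            (fun m _ => sq_nonneg _) (Finset.mem_univ i))
            ((mem_pre' lam₁ A₁ hA₁ s hr x).1 hxF)
        have hl1s : lam₁ i ^ s = Real.exp ((s:ℝ) * a i) := hl1exp i s
        have hlt : lam₁ i ^ s * x i < r := by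
          nlinarith [mul_pos (pow_pos (hl1pos i) s) hxipos, hr]
        have hkey : Real.exp ((s:ℝ) * a i - (j:ℝ) * b i) < 2 * r := by
          have h1 : Real.exp ((s:ℝ) * a i) * ((1/2) * β j i) ≤ Real.exp ((s:ℝ) * a i) * x i :=
            mul_le_mul_of_nonneg_left hxi_lo (Real.exp_pos _).le
          have h2' : Real.exp ((s:ℝ) * a i) * β j i = Real.exp ((s:ℝ) * a i - (j:ℝ) * b i) := by
            rw [hβ_def, ← Real.exp_add, sub_eq_add_neg]
          nlinarith [h1, h2', hlt, hl1s, Real.exp_pos ((s:ℝ) * a i)]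
        have hlog : (s:ℝ) * a i - (j:ℝ) * b i < Real.log (2 * r) :=
          (Real.lt_log_iff_exp_lt (by positivity)).2 hkey
        have hjN : N ≤ j := by
          by_contra hjc
          push_neg at hjc
          have hj1 : ((j:ℝ)) * b i ≤ ((N:ℝ)) * b i := by
            have : (j:ℝ) ≤ N := by exact_mod_cast hjc.le
            exact mul_le_mul_of_nonneg_right this (hb i).le
          have hs1 : a i * (s₀:ℝ) ≤ a i * s := by
            have : (s₀:ℝ) ≤ s := by exact_mod_cast hs
            exact mul_le_mul_of_nonneg_left this (ha i).le
          linarith [hs₀, hlog]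
        have hreal : C * Real.exp (-((j:ℝ) * Sb))
            ≤ (K * ρ ^ (2 * j)) * (Real.exp (-((s:ℝ) * Sa)) * W') := by
          have hρ2j : ρ ^ (2 * j) = Real.exp (-(δ * j)) := by
            rw [hρ_def, ← Real.exp_nat_mul]
            congr 1
            push_cast
            ring
          have hs2 : (s:ℝ) * Sa ≤ Sa / a i * Real.log (2 * r) + (j:ℝ) * (b i / a i) * Sa := by
            have h3 : (s:ℝ) * a i ≤ Real.log (2 * r) + (j:ℝ) * b i := by linarith [hlog]
            have h4 := mul_le_mul_of_nonneg_left h3 (le_of_lt (div_pos hSa (ha i)))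
            have h5 : Sa / a i * ((s:ℝ) * a i) = (s:ℝ) * Sa := by
              field_simp
              exact mul_div_cancel_left₀ _ (ha i).ne'
            have h6 : Sa / a i * (Real.log (2 * r) + (j:ℝ) * b i)
                = Sa / a i * Real.log (2 * r) + (j:ℝ) * (b i / a i) * Sa := by
              field_simp
            rw [h5, h6] at h4
            exact h4
          have hexpineq : -((j:ℝ) * Sb)
              ≤ Sa / a i * Real.log (2 * r) + -(δ * (j:ℝ)) + -((s:ℝ) * Sa) := by
            rw [hδ_def]
            ring_nf
            ring_nf at hs2
            linarith [hs2]
          calc C * Real.exp (-((j:ℝ) * Sb))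
              ≤ C * Real.exp (Sa / a i * Real.log (2 * r) + -(δ * (j:ℝ)) + -((s:ℝ) * Sa)) :=
                mul_le_mul_of_nonneg_left (Real.exp_le_exp.2 hexpineq) hC.le
            _ = (K * ρ ^ (2 * j)) * (Real.exp (-((s:ℝ) * Sa)) * W') := by
                rw [hρ2j, hK_def, Real.exp_add, Real.exp_add]
                field_simp
        calc volume ((⇑(A₁ ^ s) ⁻¹' ball (0 : EuclideanSpace ℝ (Fin d)) r) ∩ S j) /
              volume (⇑(A₁ ^ s) ⁻¹' ball (0 : EuclideanSpace ℝ (Fin d)) r)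
            ≤ volume (S j) / volume (⇑(A₁ ^ s) ⁻¹' ball (0 : EuclideanSpace ℝ (Fin d)) r) :=
              ENNReal.div_le_div (measure_mono Set.inter_subset_right) le_rfl
          _ ≤ ENNReal.ofReal (K * ρ ^ (2 * j)) := by
              rw [volS j, volF s]
              refine ENNReal.div_le_of_le_mul ?_
              rw [← ENNReal.ofReal_mul (by positivity)]
              exact ENNReal.ofReal_le_ofReal hreal
          _ = ENNReal.ofReal K * (QQ ^ j * QQ ^ j) := by
              rw [two_mul, pow_add, ENNReal.ofReal_mul hKpos.le,
                ENNReal.ofReal_mul (by positivity : (0:ℝ) ≤ ρ ^ j), hQQ_def,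
                ENNReal.ofReal_pow hρpos.le]
          _ ≤ (ENNReal.ofReal K * QQ ^ N) * QQ ^ j := by
              rw [mul_assoc]
              exact mul_le_mul' le_rfl
                (mul_le_mul' (pow_le_pow_of_le_one zero_le hQQ1.le hjN) le_rfl)
    rw [hFdiff]
    calc volume ((⇑(A₁ ^ s) ⁻¹' ball (0 : EuclideanSpace ℝ (Fin d)) r) ∩ ⋃ j, S j) /
          volume (⇑(A₁ ^ s) ⁻¹' ball (0 : EuclideanSpace ℝ (Fin d)) r)
        ≤ (∑' j, volume ((⇑(A₁ ^ s) ⁻¹' ball (0 : EuclideanSpace ℝ (Fin d)) r) ∩ S j)) /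
          volume (⇑(A₁ ^ s) ⁻¹' ball (0 : EuclideanSpace ℝ (Fin d)) r) := by
          refine ENNReal.div_le_div ?_ le_rfl
          rw [Set.inter_iUnion]
          exact measure_iUnion_le _
      _ = ∑' j, volume ((⇑(A₁ ^ s) ⁻¹' ball (0 : EuclideanSpace ℝ (Fin d)) r) ∩ S j) /
          volume (⇑(A₁ ^ s) ⁻¹' ball (0 : EuclideanSpace ℝ (Fin d)) r) := by
          simp only [div_eq_mul_inv]
          rw [ENNReal.tsum_mul_right]
      _ ≤ ∑' j : ℕ, (ENNReal.ofReal K * QQ ^ N) * QQ ^ j := ENNReal.tsum_le_tsum perterm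
      _ = (ENNReal.ofReal K * QQ ^ N) * (1 - QQ)⁻¹ := by
          rw [ENNReal.tsum_mul_left, ENNReal.tsum_geometric]
      _ = (ENNReal.ofReal K * (1 - QQ)⁻¹) * QQ ^ N := by ring
      _ ≤ ε := hN
  -- conclusion
  intro hEqFam
  have hE1 : E ∈ densityFamily A₁ := ⟨hEmeas, claimB⟩
  rw [hEqFam] at hE1
  exact claimA hE1.2

end Aux

theorem stmt_13 {d : ℕ} (hd : 1 ≤ d) (lam₁ lam₂ : Fin d → ℝ)
    (hlam₁ : ∀ i, 1 < lam₁ i) (hlam₂ : ∀ i, 1 < lam₂ i)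
    (hmono₁ : Monotone lam₁) (hmono₂ : Monotone lam₂)
    (A₁ A₂ : EuclideanSpace ℝ (Fin d) →ₗ[ℝ] EuclideanSpace ℝ (Fin d))
    (hA₁ : ∀ (x : EuclideanSpace ℝ (Fin d)) (i : Fin d), A₁ x i = lam₁ i * x i)
    (hA₂ : ∀ (x : EuclideanSpace ℝ (Fin d)) (i : Fin d), A₂ x i = lam₂ i * x i) :
    densityFamily A₁ = densityFamily A₂ ↔
      ∃ t : ℝ, 0 < t ∧ ∀ i, lam₁ i ^ t = lam₂ i := by
  constructor
  · intro hEq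
    by_contra hne
    exact families_ne hd lam₁ lam₂ hlam₁ hlam₂ A₁ A₂ hA₁ hA₂ hne hEq
  · rintro ⟨t, ht, hpow⟩
    have hl₁pos : ∀ i, 0 < lam₁ i := fun i => lt_trans one_pos (hlam₁ i)
    have hpow' : ∀ i, lam₂ i ^ (t⁻¹ : ℝ) = lam₁ i := by
      intro i
      rw [← hpow i, ← Real.rpow_mul (hl₁pos i).le, mul_inv_cancel₀ ht.ne', Real.rpow_one]
    ext E
    simp only [densityFamily, Set.mem_setOf_eq]
    constructor
    · rintro ⟨hE, h⟩
      exact ⟨hE, hasDensity_mono lam₁ lam₂ hlam₁ hlam₂ A₁ A₂ hA₁ hA₂ t ht hpow E hE h⟩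
    · rintro ⟨hE, h⟩
      exact ⟨hE, hasDensity_mono lam₂ lam₁ hlam₂ hlam₁ A₂ A₁ hA₂ hA₁ t⁻¹
        (inv_pos.2 ht) hpow' E hE h⟩
end
end

section
/- Let A₁, A₂ : ℝ^d → ℝ^d be positive expansive linear maps such that 𝓔_{A₁} = 𝓔_{A₂}. For μ = 1, 2 let U₁^{(μ)} denote the eigenspace of A_μ associated to its smallest eigenvalue. Then dim(U₁^{(1)} ∩ U₁^{(2)}) ≥ 1; i.e. U₁^{(1)} ∩ U₁^{(2)} ≠ {0}. -/
open MeasureTheory Filter Metric Topology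
open scoped ENNReal

noncomputable section

namespace Stmt14Aux

variable {d : ℕ}

def badSq (b : OrthonormalBasis (Fin d) ℝ (EuclideanSpace ℝ (Fin d))) (μ : Fin d → ℝ) (β : ℝ)
    (y : EuclideanSpace ℝ (Fin d)) : ℝ :=
  ∑ i ∈ Finset.univ.filter (fun i => μ i ≠ β), (b.repr y i)^2

lemma normSq_eq (b : OrthonormalBasis (Fin d) ℝ (EuclideanSpace ℝ (Fin d)))
    (y : EuclideanSpace ℝ (Fin d)) : ‖y‖^2 = ∑ i, (b.repr y i)^2 := by
  rw [← b.repr.norm_map y, EuclideanSpace.norm_eq, Real.sq_sqrt (by positivity)]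
  simp [Real.norm_eq_abs, sq_abs]

set_option maxHeartbeats 1000000 in
/-- The key density lemma: the `ε`-cone around the minimal eigenspace has the origin as an
`A`-density point. -/
lemma cone_tendsto (A : EuclideanSpace ℝ (Fin d) →ₗ[ℝ] EuclideanSpace ℝ (Fin d))
    (hsym : LinearMap.IsSymmetric A)
    (heig : ∀ μ : ℝ, Module.End.HasEigenvalue A μ → 1 < μ)
    (β : ℝ) (hβ : Module.End.HasEigenvalue A β)
    (hmin : ∀ μ : ℝ, Module.End.HasEigenvalue A μ → β ≤ μ)
    (hn : Module.finrank ℝ (EuclideanSpace ℝ (Fin d)) = d)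
    (ε : ℝ) (hε : 0 < ε) (r : ℝ) (hr : 0 < r) :
    Tendsto (fun j : ℕ =>
        volume ({y | badSq (hsym.eigenvectorBasis hn) (hsym.eigenvalues hn) β y ≤ ε^2 * ‖y‖^2}
            ∩ ⇑(A ^ j) ⁻¹' ball (0 : EuclideanSpace ℝ (Fin d)) r) /
          volume (⇑(A ^ j) ⁻¹' ball (0 : EuclideanSpace ℝ (Fin d)) r))
      atTop (𝓝 1) := by
  set b := hsym.eigenvectorBasis hn with hbdef
  set μv := hsym.eigenvalues hn with hμdef
  set C : Set (EuclideanSpace ℝ (Fin d)) := {y | badSq b μv β y ≤ ε^2 * ‖y‖^2} with hCdef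
  have hone : ∀ i, 1 < μv i := fun i => heig _ (hsym.hasEigenvalue_eigenvalues hn i)
  have hβone : 1 < β := heig _ hβ
  have hβpos : 0 < β := lt_trans one_pos hβone
  have hβle : ∀ i, β ≤ μv i := fun i => hmin _ (hsym.hasEigenvalue_eigenvalues hn i)
  have hApply : ∀ (y : EuclideanSpace ℝ (Fin d)) (i : Fin d),
      b.repr (A y) i = μv i * b.repr y i := fun y i =>
    hsym.eigenvectorBasis_apply_self_apply hn y i
  have hpow : ∀ (j : ℕ) (y : EuclideanSpace ℝ (Fin d)) (i : Fin d),
      b.repr ((A^j) y) i = (μv i)^j * b.repr y i := by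
    intro j
    induction j with
    | zero => intro y i; simp
    | succ j ih =>
      intro y i
      have h1 : (A^(j+1)) y = (A^j) (A y) := by rw [pow_succ]; rfl
      rw [h1, ih (A y) i, hApply, pow_succ]; ring
  have hker : ∀ y, A y = 0 → y = 0 := by
    intro y hy
    have h0 : ∀ i, b.repr y i = 0 := by
      intro i
      have := hApply y i
      rw [hy] at this
      simp at this
      rcases this with h | h
      · exact absurd h (by linarith [hone i])
      · exact h
    have : b.repr y = 0 := by ext i; exact h0 i
    simpa using b.repr.map_eq_zero_iff.mp this
  have hdet : LinearMap.det A ≠ 0 := by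
    intro hz
    obtain ⟨y, hy, hy0⟩ := Submodule.exists_mem_ne_zero_of_ne_bot
      (bot_lt_iff_ne_bot.mp (LinearMap.bot_lt_ker_of_det_eq_zero hz))
    exact hy0 (hker y hy)
  have hdetpow : ∀ j : ℕ, LinearMap.det (A^j) ≠ 0 := by
    intro j; rw [map_pow]; exact pow_ne_zero _ hdet
  -- the "good part"
  set good : EuclideanSpace ℝ (Fin d) → ℝ :=
    fun x => ∑ i ∈ Finset.univ.filter (fun i => μv i = β), (b.repr x i)^2 with hgooddef
  have hgood_cont : Continuous good :=
    continuous_finset_sum _ fun i _ =>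
      (((EuclideanSpace.proj i).continuous.comp b.repr.continuous).pow 2)
  -- there is an index with eigenvalue β
  obtain ⟨v, hv⟩ := hβ.exists_hasEigenvector
  obtain ⟨i₀, hi₀⟩ : ∃ i, μv i = β := by
    have hAv : A v = β • v := Module.End.mem_eigenspace_iff.mp hv.1
    have hv0 : v ≠ 0 := hv.2
    by_contra hno
    push_neg at hno
    have : ∀ i, b.repr v i = 0 := by
      intro i
      have h1 : b.repr (A v) i = μv i * b.repr v i := hApply v i
      have h2 : b.repr (A v) i = β * b.repr v i := by
        rw [hAv, _root_.map_smul]; rfl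
      rcases mul_eq_mul_right_iff.mp (h1.symm.trans h2) with h | h
      · first
        | exact absurd h (hno i)
        | exact absurd h.symm (hno i)
      · exact h
    have : b.repr v = 0 := by ext i; exact this i
    exact hv0 (by simpa using b.repr.map_eq_zero_iff.mp this)
  -- kernel submodule of the i₀ coordinate: a proper submodule
  set ℓ : EuclideanSpace ℝ (Fin d) →ₗ[ℝ] ℝ :=
    (EuclideanSpace.proj i₀ : EuclideanSpace ℝ (Fin d) →L[ℝ] ℝ).toLinearMap.comp (b.repr.toLinearEquiv.toLinearMap) with hℓdef
  have hℓapp : ∀ y, ℓ y = b.repr y i₀ := fun y => rfl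
  have hℓtop : LinearMap.ker ℓ ≠ ⊤ := by
    intro htop
    have : ℓ (b i₀) = 0 := by
      have : b i₀ ∈ LinearMap.ker ℓ := htop ▸ Submodule.mem_top
      exact this
    rw [hℓapp, b.repr_self] at this
    simp [EuclideanSpace.single_apply] at this
  have hkervol : volume (LinearMap.ker ℓ : Set (EuclideanSpace ℝ (Fin d))) = 0 :=
    Measure.addHaar_submodule volume _ hℓtop
  -- now the limit
  rw [ENNReal.tendsto_nhds ENNReal.one_ne_top]
  intro η hη
  set v0 := volume (ball (0 : EuclideanSpace ℝ (Fin d)) r) with hv0def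
  have hv0ne : v0 ≠ 0 := (measure_ball_pos volume 0 hr).ne'
  have hv0top : v0 ≠ ⊤ := measure_ball_lt_top.ne
  -- shrinking bad cones inside the ball
  set T : ℕ → Set (EuclideanSpace ℝ (Fin d)) :=
    fun n => {x | x ∈ ball (0 : EuclideanSpace ℝ (Fin d)) r ∧
      good x < ((n:ℝ)+1)⁻¹^2 * ‖x‖^2} with hTdef
  have hTmeas : ∀ n, MeasurableSet (T n) := by
    intro n
    exact measurableSet_ball.inter
      (isOpen_lt hgood_cont (continuous_const.mul ((continuous_norm).pow 2))).measurableSet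
  have hTanti : Antitone T := by
    intro n m hnm x hx
    refine ⟨hx.1, lt_of_lt_of_le hx.2 ?_⟩
    have h1 : ((m:ℝ)+1)⁻¹ ≤ ((n:ℝ)+1)⁻¹ := by
      apply inv_anti₀ (by positivity)
      exact_mod_cast by omega
    have h2 : (0:ℝ) ≤ ((m:ℝ)+1)⁻¹ := by positivity
    exact mul_le_mul_of_nonneg_right (pow_le_pow_left₀ h2 h1 2) (sq_nonneg ‖x‖)
  have hTinter : (⋂ n, T n) ⊆ (LinearMap.ker ℓ : Set (EuclideanSpace ℝ (Fin d))) := by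
    intro x hx
    have hx' : ∀ n : ℕ, good x < ((n:ℝ)+1)⁻¹^2 * ‖x‖^2 := fun n =>
      (Set.mem_iInter.mp hx n).2
    have hgood0 : good x = 0 := by
      by_contra hne
      have hpos : 0 < good x :=
        lt_of_le_of_ne (Finset.sum_nonneg fun _ _ => sq_nonneg _) (Ne.symm hne)
      obtain ⟨n, hn'⟩ := exists_nat_gt (‖x‖^2 / good x)
      have hnpos : (0:ℝ) < (n:ℝ)+1 := by positivity
      have h1 : ‖x‖^2 < ((n:ℝ)+1)^2 * good x := by
        rw [div_lt_iff₀ hpos] at hn'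
        nlinarith [hpos, hn']
      have h2 := hx' n
      have h3 : ((n:ℝ)+1)^2 * good x < ((n:ℝ)+1)^2 * (((n:ℝ)+1)⁻¹^2 * ‖x‖^2) :=
        mul_lt_mul_of_pos_left h2 (by positivity)
      have h4 : ((n:ℝ)+1)^2 * (((n:ℝ)+1)⁻¹^2 * ‖x‖^2) = ‖x‖^2 := by
        field_simp
      linarith [h1, h3]
    have : b.repr x i₀ = 0 := by
      have hmem : (b.repr x i₀)^2 = 0 := by
        have := Finset.sum_eq_zero_iff_of_nonneg
          (fun i _ => sq_nonneg (b.repr x i)) |>.mp hgood0 i₀ (by simp [hi₀])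
        exact this
      nlinarith [sq_nonneg (b.repr x i₀)]
    simpa [LinearMap.mem_ker, hℓapp] using this
  have hTtend : Tendsto (fun n => volume (T n)) atTop (𝓝 0) := by
    have h := tendsto_measure_iInter_atTop (fun n => (hTmeas n).nullMeasurableSet) hTanti
      ⟨0, ((measure_mono (fun x hx => hx.1)).trans_lt (measure_ball_lt_top : volume (ball (0 : EuclideanSpace ℝ (Fin d)) r) < ⊤)).ne⟩
    have h0 : volume (⋂ n, T n) = 0 :=
      le_antisymm ((measure_mono hTinter).trans hkervol.le) (by positivity)
    rw [h0] at h
    exact h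
  have hηv : 0 < η * v0 := ENNReal.mul_pos hη.ne' hv0ne
  obtain ⟨n₀, hn₀⟩ : ∃ n, volume (T n) < η * v0 :=
    (hTtend.eventually_lt_const hηv).exists
  set δ : ℝ := ((n₀:ℝ)+1)⁻¹ with hδdef
  have hδpos : 0 < δ := by positivity
  set S : Set (EuclideanSpace ℝ (Fin d)) := {x | δ^2 * ‖x‖^2 ≤ good x} with hSdef
  have hball_sub : ball (0 : EuclideanSpace ℝ (Fin d)) r ⊆ (S ∩ ball 0 r) ∪ T n₀ := by
    intro x hx
    by_cases hxS : x ∈ S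
    · exact Or.inl ⟨hxS, hx⟩
    · exact Or.inr ⟨hx, not_le.mp hxS⟩
  have hvle : v0 ≤ volume (S ∩ ball 0 r) + volume (T n₀) :=
    (measure_mono hball_sub).trans (measure_union_le _ _)
  -- the eventual coordinate estimate
  have hev : ∀ᶠ j : ℕ in atTop, ∀ i, μv i ≠ β → (β / μv i)^j ≤ ε * δ := by
    rw [eventually_all]
    intro i
    by_cases hiβ : μv i = β
    · filter_upwards with j hcon; exact absurd hiβ hcon
    · have hlt : β / μv i < 1 := by
        rw [div_lt_one (by linarith [hone i])]
        exact lt_of_le_of_ne (hβle i) (Ne.symm hiβ)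
      have hge : 0 ≤ β / μv i := le_of_lt (div_pos hβpos (lt_trans one_pos (hone i)))
      have htend := tendsto_pow_atTop_nhds_zero_of_lt_one hge hlt
      filter_upwards [htend.eventually (eventually_le_nhds (mul_pos hε hδpos))]
        with j hj _
      exact hj
  filter_upwards [hev] with j hj
  -- key inclusion
  have hincl : ⇑(A^j) ⁻¹' (S ∩ ball 0 r) ⊆ C ∩ ⇑(A^j) ⁻¹' ball 0 r := by
    intro y hy
    obtain ⟨hyS, hyB⟩ := hy
    refine ⟨?_, hyB⟩
    show badSq b μv β y ≤ ε^2 * ‖y‖^2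
    have hX : ∀ i, b.repr ((A^j) y) i = (μv i)^j * b.repr y i := fun i => hpow j y i
    have hSx : δ^2 * ‖(A^j) y‖^2 ≤ good ((A^j) y) := hyS
    have hβj : (0:ℝ) < β^j := pow_pos hβpos j
    have hstep1 : (β^j)^2 * badSq b μv β y ≤ (ε*δ)^2 * ‖(A^j) y‖^2 := by
      rw [normSq_eq b ((A^j) y)]
      calc (β^j)^2 * badSq b μv β y
          = ∑ i ∈ Finset.univ.filter (fun i => μv i ≠ β), (β^j)^2 * (b.repr y i)^2 := by
            rw [badSq, Finset.mul_sum]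
        _ ≤ ∑ i ∈ Finset.univ.filter (fun i => μv i ≠ β),
              (ε*δ)^2 * (b.repr ((A^j) y) i)^2 := by
            refine Finset.sum_le_sum fun i hi => ?_
            have hiβ : μv i ≠ β := by simpa using hi
            have hμpos : (0:ℝ) < μv i := lt_trans one_pos (hone i)
            have hμj : (0:ℝ) < (μv i)^j := pow_pos hμpos j
            have h1 : (β/μv i)^j ≤ ε*δ := hj i hiβ
            have h2 : β^j ≤ ε*δ*(μv i)^j := by
              rw [div_pow, div_le_iff₀ hμj] at h1
              linarith
            have h4 : (β^j)^2 ≤ (ε*δ*(μv i)^j)^2 := by nlinarith [h2, hβj.le]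
            rw [hX i]
            calc (β^j)^2 * (b.repr y i)^2 ≤ (ε*δ*(μv i)^j)^2 * (b.repr y i)^2 :=
                  mul_le_mul_of_nonneg_right h4 (sq_nonneg _)
              _ = (ε*δ)^2 * ((μv i)^j * b.repr y i)^2 := by ring
        _ ≤ ∑ i, (ε*δ)^2 * (b.repr ((A^j) y) i)^2 :=
            Finset.sum_le_univ_sum_of_nonneg (fun i => by positivity)
        _ = (ε*δ)^2 * ∑ i, (b.repr ((A^j) y) i)^2 := by rw [Finset.mul_sum]
    have hstep2 : (ε*δ)^2 * ‖(A^j) y‖^2 ≤ ε^2 * good ((A^j) y) := by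
      nlinarith [hSx, sq_nonneg ε]
    have hstep3 : good ((A^j) y) ≤ (β^j)^2 * ‖y‖^2 := by
      rw [normSq_eq b y]
      calc good ((A^j) y)
          = ∑ i ∈ Finset.univ.filter (fun i => μv i = β), (β^j)^2 * (b.repr y i)^2 := by
            refine Finset.sum_congr rfl fun i hi => ?_
            have hiβ : μv i = β := by simpa using hi
            rw [hX i, hiβ]
            ring
        _ ≤ ∑ i, (β^j)^2 * (b.repr y i)^2 :=
            Finset.sum_le_univ_sum_of_nonneg (fun i => by positivity)
        _ = (β^j)^2 * ∑ i, (b.repr y i)^2 := by rw [Finset.mul_sum]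
    have hfinal : (β^j)^2 * badSq b μv β y ≤ (β^j)^2 * (ε^2 * ‖y‖^2) := by
      calc (β^j)^2 * badSq b μv β y ≤ (ε*δ)^2 * ‖(A^j) y‖^2 := hstep1
        _ ≤ ε^2 * good ((A^j) y) := hstep2
        _ ≤ ε^2 * ((β^j)^2 * ‖y‖^2) := mul_le_mul_of_nonneg_left hstep3 (sq_nonneg ε)
        _ = (β^j)^2 * (ε^2 * ‖y‖^2) := by ring
    exact le_of_mul_le_mul_left hfinal (by positivity)
  set c : ℝ≥0∞ := ENNReal.ofReal |(LinearMap.det (A^j))⁻¹| with hcdef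
  have hc0 : c ≠ 0 := by
    rw [hcdef]
    simp only [ne_eq, ENNReal.ofReal_eq_zero, not_le]
    exact abs_pos.mpr (inv_ne_zero (hdetpow j))
  have hctop : c ≠ ⊤ := ENNReal.ofReal_ne_top
  have hden : volume (⇑(A^j) ⁻¹' ball (0 : EuclideanSpace ℝ (Fin d)) r) = c * v0 :=
    Measure.addHaar_preimage_linearMap volume (hdetpow j) _
  have hnum : c * volume (S ∩ ball 0 r) ≤
      volume (C ∩ ⇑(A^j) ⁻¹' ball (0 : EuclideanSpace ℝ (Fin d)) r) := by
    calc c * volume (S ∩ ball 0 r)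
        = volume (⇑(A^j) ⁻¹' (S ∩ ball 0 r)) :=
          (Measure.addHaar_preimage_linearMap volume (hdetpow j) _).symm
      _ ≤ _ := measure_mono hincl
  constructor
  · -- lower bound
    have hstep1 : (1 - η) * v0 ≤ volume (S ∩ ball 0 r) := by
      have h1 : (1 - η) * v0 = v0 - η * v0 := by
        rw [ENNReal.sub_mul (fun _ _ => hv0top), one_mul]
      rw [h1, tsub_le_iff_right]
      exact hvle.trans (add_le_add_right hn₀.le _)
    have hstep2 : (1 - η) ≤ volume (S ∩ ball 0 r) / v0 :=
      (ENNReal.le_div_iff_mul_le (Or.inl hv0ne) (Or.inl hv0top)).mpr hstep1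
    calc (1:ℝ≥0∞) - η ≤ volume (S ∩ ball 0 r) / v0 := hstep2
      _ = (c * volume (S ∩ ball 0 r)) / (c * v0) :=
          (ENNReal.mul_div_mul_left _ _ hc0 hctop).symm
      _ ≤ _ := by
          rw [hden]
          exact ENNReal.div_le_div_right hnum _
  · -- upper bound
    refine le_trans ?_ le_self_add
    apply ENNReal.div_le_of_le_mul
    rw [one_mul]
    exact measure_mono Set.inter_subset_right

lemma badSq_nonneg (b : OrthonormalBasis (Fin d) ℝ (EuclideanSpace ℝ (Fin d))) (μ : Fin d → ℝ)
    (β : ℝ) (y : EuclideanSpace ℝ (Fin d)) : 0 ≤ badSq b μ β y :=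
  Finset.sum_nonneg fun _ _ => sq_nonneg _

lemma continuous_coord (b : OrthonormalBasis (Fin d) ℝ (EuclideanSpace ℝ (Fin d))) (i : Fin d) :
    Continuous (fun y => b.repr y i) :=
  (EuclideanSpace.proj i).continuous.comp b.repr.continuous

lemma badSq_continuous (b : OrthonormalBasis (Fin d) ℝ (EuclideanSpace ℝ (Fin d)))
    (μ : Fin d → ℝ) (β : ℝ) : Continuous (badSq b μ β) :=
  continuous_finset_sum _ fun i _ => ((continuous_coord b i).pow 2)

lemma badSq_smul (b : OrthonormalBasis (Fin d) ℝ (EuclideanSpace ℝ (Fin d)))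
    (μ : Fin d → ℝ) (β : ℝ) (c : ℝ) (y : EuclideanSpace ℝ (Fin d)) :
    badSq b μ β (c • y) = c^2 * badSq b μ β y := by
  unfold badSq
  rw [Finset.mul_sum]
  refine Finset.sum_congr rfl fun i _ => ?_
  rw [_root_.map_smul]
  have : (c • b.repr y) i = c * b.repr y i := rfl
  rw [this, mul_pow]

lemma badSq_eq_zero_mem {A : EuclideanSpace ℝ (Fin d) →ₗ[ℝ] EuclideanSpace ℝ (Fin d)}
    (b : OrthonormalBasis (Fin d) ℝ (EuclideanSpace ℝ (Fin d))) (μ : Fin d → ℝ) (β : ℝ)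
    (hb : ∀ i, μ i = β → A (b i) = β • b i)
    {y : EuclideanSpace ℝ (Fin d)} (hy : badSq b μ β y = 0) :
    y ∈ Module.End.eigenspace A β := by
  have hzero : ∀ i ∈ Finset.univ.filter (fun i => μ i ≠ β), (b.repr y i)^2 = 0 :=
    (Finset.sum_eq_zero_iff_of_nonneg fun _ _ => sq_nonneg _).mp hy
  have hy' : y = ∑ i, b.repr y i • b i := (b.sum_repr y).symm
  rw [hy']
  refine Submodule.sum_mem _ fun i _ => ?_
  by_cases hμ : μ i = β
  · exact Submodule.smul_mem _ _ (Module.End.mem_eigenspace_iff.mpr (hb i hμ))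
  · have : (b.repr y i)^2 = 0 := hzero i (by simp [hμ])
    have : b.repr y i = 0 := by nlinarith [sq_nonneg (b.repr y i)]
    simp [this]


lemma cone_measurable (b : OrthonormalBasis (Fin d) ℝ (EuclideanSpace ℝ (Fin d)))
    (μ : Fin d → ℝ) (β : ℝ) (ε : ℝ) :
    MeasurableSet {y : EuclideanSpace ℝ (Fin d) | badSq b μ β y ≤ ε^2 * ‖y‖^2} :=
  (isClosed_le (badSq_continuous b μ β)
    (continuous_const.mul ((continuous_norm).pow 2))).measurableSet

lemma cone_hasDensity (A : EuclideanSpace ℝ (Fin d) →ₗ[ℝ] EuclideanSpace ℝ (Fin d))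
    (hsym : LinearMap.IsSymmetric A)
    (heig : ∀ μ : ℝ, Module.End.HasEigenvalue A μ → 1 < μ)
    (β : ℝ) (hβ : Module.End.HasEigenvalue A β)
    (hmin : ∀ μ : ℝ, Module.End.HasEigenvalue A μ → β ≤ μ)
    (hn : Module.finrank ℝ (EuclideanSpace ℝ (Fin d)) = d)
    (ε : ℝ) (hε : 0 < ε) :
    HasADensityZero A
      {y | badSq (hsym.eigenvectorBasis hn) (hsym.eigenvalues hn) β y ≤ ε^2 * ‖y‖^2} :=
  fun r hr => cone_tendsto A hsym heig β hβ hmin hn ε hε r hr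

end Stmt14Aux

open Stmt14Aux in
theorem stmt_14 {d : ℕ} (hd : 1 ≤ d)
    (A₁ A₂ : EuclideanSpace ℝ (Fin d) →ₗ[ℝ] EuclideanSpace ℝ (Fin d))
    (hsym₁ : LinearMap.IsSymmetric A₁) (hsym₂ : LinearMap.IsSymmetric A₂)
    (heig₁ : ∀ μ : ℝ, Module.End.HasEigenvalue A₁ μ → 1 < μ)
    (heig₂ : ∀ μ : ℝ, Module.End.HasEigenvalue A₂ μ → 1 < μ)
    (β₁ β₂ : ℝ)
    (hβ₁ : Module.End.HasEigenvalue A₁ β₁) (hβ₂ : Module.End.HasEigenvalue A₂ β₂)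
    (hmin₁ : ∀ μ : ℝ, Module.End.HasEigenvalue A₁ μ → β₁ ≤ μ)
    (hmin₂ : ∀ μ : ℝ, Module.End.HasEigenvalue A₂ μ → β₂ ≤ μ)
    (h : densityFamily A₁ = densityFamily A₂) :
    Module.End.eigenspace A₁ β₁ ⊓ Module.End.eigenspace A₂ β₂ ≠ ⊥ := by
  intro hbot
  have hn : Module.finrank ℝ (EuclideanSpace ℝ (Fin d)) = d := finrank_euclideanSpace_fin
  set b₁ := hsym₁.eigenvectorBasis hn with hb₁
  set μ₁ := hsym₁.eigenvalues hn with hμ₁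
  set b₂ := hsym₂.eigenvectorBasis hn with hb₂
  set μ₂ := hsym₂.eigenvalues hn with hμ₂
  have hbmem₁ : ∀ i, μ₁ i = β₁ → A₁ (b₁ i) = β₁ • b₁ i := by
    intro i hi
    have h0 := hsym₁.apply_eigenvectorBasis hn i
    rw [RCLike.ofReal_real_eq_id] at h0
    rw [← hμ₁, ← hb₁, hi] at h0
    exact h0
  have hbmem₂ : ∀ i, μ₂ i = β₂ → A₂ (b₂ i) = β₂ • b₂ i := by
    intro i hi
    have h0 := hsym₂.apply_eigenvectorBasis hn i
    rw [RCLike.ofReal_real_eq_id] at h0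
    rw [← hμ₂, ← hb₂, hi] at h0
    exact h0
  -- the function measuring distance to the two minimal eigenspaces
  set F : EuclideanSpace ℝ (Fin d) → ℝ :=
    fun z => badSq b₁ μ₁ β₁ z + badSq b₂ μ₂ β₂ z with hF
  have hFcont : Continuous F := (badSq_continuous _ _ _).add (badSq_continuous _ _ _)
  clear_value F
  -- sphere is compact and nonempty
  have hsph_ne : (sphere (0 : EuclideanSpace ℝ (Fin d)) 1).Nonempty := by
    refine ⟨EuclideanSpace.single (⟨0, hd⟩ : Fin d) (1:ℝ), ?_⟩
    rw [mem_sphere_zero_iff_norm, EuclideanSpace.norm_single]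
    norm_num
  obtain ⟨z₀, hz₀mem, hz₀min'⟩ := (isCompact_sphere (0 : EuclideanSpace ℝ (Fin d)) 1)
    |>.exists_isMinOn hsph_ne hFcont.continuousOn
  have hz₀min : ∀ z ∈ sphere (0 : EuclideanSpace ℝ (Fin d)) 1, F z₀ ≤ F z :=
    fun z hz => hz₀min' hz
  haveI : Nontrivial (EuclideanSpace ℝ (Fin d)) :=
    ⟨(hsym₁.eigenvectorBasis hn) ⟨0, hd⟩, 0, (hsym₁.eigenvectorBasis hn).toBasis.ne_zero _⟩
  have hz₀norm : ‖z₀‖ = 1 := mem_sphere_zero_iff_norm.mp hz₀mem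
  have hm : 0 < F z₀ := by
    rcases lt_or_ge 0 (F z₀) with h' | h'
    · exact h'
    · exfalso
      have h1 : badSq b₁ μ₁ β₁ z₀ = 0 := by
        have := badSq_nonneg b₁ μ₁ β₁ z₀
        have := badSq_nonneg b₂ μ₂ β₂ z₀
        simp only [hF] at h'
        linarith
      have h2 : badSq b₂ μ₂ β₂ z₀ = 0 := by
        have := badSq_nonneg b₁ μ₁ β₁ z₀
        have := badSq_nonneg b₂ μ₂ β₂ z₀
        simp only [hF] at h'
        linarith
      have hz1 : z₀ ∈ Module.End.eigenspace A₁ β₁ := badSq_eq_zero_mem b₁ μ₁ β₁ hbmem₁ h1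
      have hz2 : z₀ ∈ Module.End.eigenspace A₂ β₂ := badSq_eq_zero_mem b₂ μ₂ β₂ hbmem₂ h2
      have : z₀ ∈ Module.End.eigenspace A₁ β₁ ⊓ Module.End.eigenspace A₂ β₂ := ⟨hz1, hz2⟩
      rw [hbot] at this
      have : z₀ = 0 := Submodule.mem_bot ℝ |>.mp this
      rw [this] at hz₀norm
      simp at hz₀norm
  set ε : ℝ := Real.sqrt (F z₀/3) with hε
  have hεpos : 0 < ε := Real.sqrt_pos.mpr (div_pos hm (by norm_num))
  have hεsq : ε^2 = F z₀/3 := Real.sq_sqrt (div_pos hm (by norm_num)).le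
  set C₁ : Set (EuclideanSpace ℝ (Fin d)) := {y | badSq b₁ μ₁ β₁ y ≤ ε^2 * ‖y‖^2} with hC₁
  set C₂ : Set (EuclideanSpace ℝ (Fin d)) := {y | badSq b₂ μ₂ β₂ y ≤ ε^2 * ‖y‖^2} with hC₂
  -- disjointness
  have hdisj : C₁ ∩ C₂ ⊆ {0} := by
    intro y ⟨hy1, hy2⟩
    by_contra hy0
    have hyne : y ≠ 0 := hy0
    have hynorm : (0:ℝ) < ‖y‖ := norm_pos_iff.mpr hyne
    set z := ‖y‖⁻¹ • y with hzdef
    have hznorm : ‖z‖ = 1 := by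
      rw [hzdef, norm_smul, norm_inv, norm_norm, inv_mul_cancel₀ hynorm.ne']
    have hz1 : badSq b₁ μ₁ β₁ z ≤ ε^2 := by
      rw [hzdef, badSq_smul]
      have : (‖y‖⁻¹)^2 * badSq b₁ μ₁ β₁ y ≤ (‖y‖⁻¹)^2 * (ε^2 * ‖y‖^2) :=
        mul_le_mul_of_nonneg_left hy1 (by positivity)
      calc (‖y‖⁻¹)^2 * badSq b₁ μ₁ β₁ y ≤ (‖y‖⁻¹)^2 * (ε^2 * ‖y‖^2) := this
        _ = ε^2 := by field_simp
    have hz2 : badSq b₂ μ₂ β₂ z ≤ ε^2 := by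
      rw [hzdef, badSq_smul]
      have : (‖y‖⁻¹)^2 * badSq b₂ μ₂ β₂ y ≤ (‖y‖⁻¹)^2 * (ε^2 * ‖y‖^2) :=
        mul_le_mul_of_nonneg_left hy2 (by positivity)
      calc (‖y‖⁻¹)^2 * badSq b₂ μ₂ β₂ y ≤ (‖y‖⁻¹)^2 * (ε^2 * ‖y‖^2) := this
        _ = ε^2 := by field_simp
    have hmle : F z₀ ≤ F z := hz₀min z (mem_sphere_zero_iff_norm.mpr hznorm)
    have : F z ≤ 2 * ε^2 := by
      simp only [hF]
      linarith
    rw [hεsq] at this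
    linarith
  -- both cones are in the density family of A₁
  have hmem₂ : C₂ ∈ densityFamily A₂ :=
    ⟨cone_measurable b₂ μ₂ β₂ ε, cone_hasDensity A₂ hsym₂ heig₂ β₂ hβ₂ hmin₂ hn ε hεpos⟩
  rw [← h] at hmem₂
  have hd₂ : HasADensityZero A₁ C₂ := hmem₂.2
  have hd₁ : HasADensityZero A₁ C₁ := cone_hasDensity A₁ hsym₁ heig₁ β₁ hβ₁ hmin₁ hn ε hεpos
  have hf := hd₁ 1 one_pos
  have hg := hd₂ 1 one_pos
  -- for every j, the two ratios add up to at most 1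
  have hle : ∀ j : ℕ,
      volume (C₁ ∩ ⇑(A₁ ^ j) ⁻¹' ball (0 : EuclideanSpace ℝ (Fin d)) 1) /
          volume (⇑(A₁ ^ j) ⁻¹' ball (0 : EuclideanSpace ℝ (Fin d)) 1) +
        volume (C₂ ∩ ⇑(A₁ ^ j) ⁻¹' ball (0 : EuclideanSpace ℝ (Fin d)) 1) /
          volume (⇑(A₁ ^ j) ⁻¹' ball (0 : EuclideanSpace ℝ (Fin d)) 1) ≤ 1 := by
    intro j
    set P := ⇑(A₁ ^ j) ⁻¹' ball (0 : EuclideanSpace ℝ (Fin d)) 1 with hP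
    have hPmeas : MeasurableSet P :=
      (measurableSet_ball.preimage (LinearMap.continuous_of_finiteDimensional (A₁^j)).measurable)
    have hC₂meas : MeasurableSet (C₂ ∩ P) := (cone_measurable b₂ μ₂ β₂ ε).inter hPmeas
    have hkey : volume (C₁ ∩ P) + volume (C₂ ∩ P) ≤ volume P := by
      have h1 : volume ((C₁ ∩ P) ∪ (C₂ ∩ P)) + volume ((C₁ ∩ P) ∩ (C₂ ∩ P)) =
          volume (C₁ ∩ P) + volume (C₂ ∩ P) := measure_union_add_inter _ hC₂meas
      have h2 : volume ((C₁ ∩ P) ∩ (C₂ ∩ P)) = 0 := by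
        refine measure_mono_null ?_ (measure_singleton (0 : EuclideanSpace ℝ (Fin d)))
        intro y ⟨⟨hy1, _⟩, ⟨hy2, _⟩⟩
        exact hdisj ⟨hy1, hy2⟩
      rw [h2, add_zero] at h1
      rw [← h1]
      exact measure_mono (Set.union_subset (Set.inter_subset_right) (Set.inter_subset_right))
    rw [ENNReal.div_add_div_same]
    apply ENNReal.div_le_of_le_mul
    rw [one_mul]
    exact hkey
  have hsum := hf.add hg
  have hcontra : (1:ℝ≥0∞) + 1 ≤ 1 := le_of_tendsto hsum (Filter.Eventually.of_forall hle)
  rw [one_add_one_eq_two] at hcontra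
  exact (ENNReal.one_lt_two).not_ge hcontra
end
end

section
/- Let A₁, A₂ : ℝ^d → ℝ^d be self-adjoint expansive linear maps, written as A_μ = C_μ J_μ C_μ^{-1} (μ = 1, 2) with C_μ invertible and J_μ diagonal with the (real) eigenvalues λ₁^{(μ)}, …, λ_d^{(μ)} of A_μ on the diagonal. Let A′_μ := C_μ J′_μ C_μ^{-1}, where J′_μ is the diagonal matrix with entries |λ₁^{(μ)}|, …, |λ_d^{(μ)}|. Then 𝓔_{A₁} = 𝓔_{A₂} if and only if there exists t > 0 such that (A′₁)^t = A′₂. -/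
open MeasureTheory Filter Metric Topology
open Real
open scoped RealInnerProductSpace ENNReal NNReal

noncomputable section

namespace Stmt16

variable {d : ℕ}

local notation "Ed" => EuclideanSpace ℝ (Fin d)

def diagMap (κ : Fin d → ℝ) : Ed →ₗ[ℝ] Ed where
  toFun x := (WithLp.equiv 2 (Fin d → ℝ)).symm fun i => κ i * x i
  map_add' x y := by
    apply (WithLp.equiv 2 (Fin d → ℝ)).injective
    funext i
    simp [mul_add]
  map_smul' c x := by
    apply (WithLp.equiv 2 (Fin d → ℝ)).injective
    funext i
    simp
    ring

@[simp] lemma diagMap_apply (κ : Fin d → ℝ) (x : Ed) (i : Fin d) :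
    diagMap κ x i = κ i * x i := rfl

def Tmap (b : OrthonormalBasis (Fin d) ℝ Ed) (κ : Fin d → ℝ) : Ed →ₗ[ℝ] Ed :=
  (b.repr.symm.toLinearEquiv.toLinearMap) ∘ₗ (diagMap κ) ∘ₗ (b.repr.toLinearEquiv.toLinearMap)

@[simp] lemma repr_Tmap (b : OrthonormalBasis (Fin d) ℝ Ed) (κ : Fin d → ℝ) (x : Ed) (i : Fin d) :
    b.repr (Tmap b κ x) i = κ i * b.repr x i := by
  simp [Tmap]

lemma Tmap_basis (b : OrthonormalBasis (Fin d) ℝ Ed) (κ : Fin d → ℝ) (i : Fin d) :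
    Tmap b κ (b i) = κ i • b i := by
  apply b.repr.injective
  refine (WithLp.equiv 2 (Fin d → ℝ)).injective ?_
  funext j
  have := repr_Tmap b κ (b i) j
  simp only [WithLp.equiv_apply] at this ⊢
  rw [this]
  rcases eq_or_ne j i with rfl | hji
  · simp [b.repr_self, EuclideanSpace.single_apply]
  · simp [b.repr_self, EuclideanSpace.single_apply, hji]

lemma Tmap_comp (b : OrthonormalBasis (Fin d) ℝ Ed) (κ κ' : Fin d → ℝ) (x : Ed) :
    Tmap b κ (Tmap b κ' x) = Tmap b (fun i => κ i * κ' i) x := by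
  apply b.repr.injective
  refine (WithLp.equiv 2 (Fin d → ℝ)).injective ?_
  funext j
  simp [mul_assoc]

lemma Tmap_one (b : OrthonormalBasis (Fin d) ℝ Ed) (x : Ed) :
    Tmap b (fun _ => 1) x = x := by
  apply b.repr.injective
  refine (WithLp.equiv 2 (Fin d → ℝ)).injective ?_
  funext j
  simp

lemma norm_Tmap (b : OrthonormalBasis (Fin d) ℝ Ed) (κ : Fin d → ℝ) (x : Ed) :
    ‖Tmap b κ x‖ = Real.sqrt (∑ i, (κ i * b.repr x i) ^ 2) := by
  rw [← b.repr.norm_map (Tmap b κ x)]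
  rw [EuclideanSpace.norm_eq]
  congr 1
  refine Finset.sum_congr rfl fun i _ => ?_
  rw [repr_Tmap, Real.norm_eq_abs, sq_abs]

lemma norm_eq_sqrt_repr (b : OrthonormalBasis (Fin d) ℝ Ed) (x : Ed) :
    ‖x‖ = Real.sqrt (∑ i, (b.repr x i) ^ 2) := by
  have := norm_Tmap b (fun _ => 1) x
  rw [Tmap_one] at this
  simpa using this

lemma norm_Tmap_le_norm_Tmap (b : OrthonormalBasis (Fin d) ℝ Ed) {κ κ' : Fin d → ℝ}
    (h : ∀ i, |κ i| ≤ |κ' i|) (x : Ed) : ‖Tmap b κ x‖ ≤ ‖Tmap b κ' x‖ := by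
  rw [norm_Tmap, norm_Tmap]
  apply Real.sqrt_le_sqrt
  refine Finset.sum_le_sum fun i _ => ?_
  rw [← sq_abs (κ i * _), ← sq_abs (κ' i * _), abs_mul, abs_mul]
  have := mul_le_mul_of_nonneg_right (h i) (abs_nonneg (b.repr x i))
  exact pow_le_pow_left₀ (by positivity) this 2

lemma norm_Tmap_congr (b : OrthonormalBasis (Fin d) ℝ Ed) {κ κ' : Fin d → ℝ}
    (h : ∀ i, |κ i| = |κ' i|) (x : Ed) : ‖Tmap b κ x‖ = ‖Tmap b κ' x‖ :=
  le_antisymm (norm_Tmap_le_norm_Tmap b (fun i => (h i).le) x)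
    (norm_Tmap_le_norm_Tmap b (fun i => (h i).ge) x)

lemma abs_repr_le_norm (b : OrthonormalBasis (Fin d) ℝ Ed) (x : Ed) (i : Fin d) :
    |b.repr x i| ≤ ‖x‖ := by
  rw [norm_eq_sqrt_repr b x, ← Real.sqrt_sq_eq_abs]
  apply Real.sqrt_le_sqrt
  exact Finset.single_le_sum (f := fun i => (b.repr x i)^2) (fun j _ => sq_nonneg _)
    (Finset.mem_univ i)

lemma inner_Tmap (b : OrthonormalBasis (Fin d) ℝ Ed) (κ : Fin d → ℝ) (x y : Ed) :
    ⟪Tmap b κ x, y⟫ = ⟪x, Tmap b κ y⟫ := by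
  rw [← b.repr.inner_map_map (Tmap b κ x) y, ← b.repr.inner_map_map x (Tmap b κ y)]
  simp only [PiLp.inner_apply, RCLike.inner_apply, conj_trivial, repr_Tmap]
  exact Finset.sum_congr rfl fun i _ => by ring

lemma det_Tmap (b : OrthonormalBasis (Fin d) ℝ Ed) (κ : Fin d → ℝ) :
    LinearMap.det (Tmap b κ) = ∏ i, κ i := by
  classical
  rw [← LinearMap.det_toMatrix b.toBasis]
  have : LinearMap.toMatrix b.toBasis b.toBasis (Tmap b κ) = Matrix.diagonal κ := by
    ext i j
    rw [LinearMap.toMatrix_apply, b.coe_toBasis, b.coe_toBasis_repr_apply, Tmap_basis,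
      _root_.map_smul]
    rcases eq_or_ne i j with rfl | hij
    · simp [b.repr_self, EuclideanSpace.single_apply]
    · rw [Matrix.diagonal_apply_ne _ hij]
      simp only [b.repr_self, _root_.map_smul, EuclideanSpace.single_apply]
      simp [hij]
  rw [this, Matrix.det_diagonal]


/-! ### rpow powers of a diagonal map -/

def Tpow (b : OrthonormalBasis (Fin d) ℝ Ed) (ν : Fin d → ℝ) (s : ℝ) : Ed →ₗ[ℝ] Ed :=
  Tmap b (fun i => ν i ^ s)

lemma Tpow_comp (b : OrthonormalBasis (Fin d) ℝ Ed) {ν : Fin d → ℝ} (hν : ∀ i, 0 < ν i)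
    (s u : ℝ) (x : Ed) : Tpow b ν s (Tpow b ν u x) = Tpow b ν (s + u) x := by
  have h : (fun i => ν i ^ s * ν i ^ u) = fun i => ν i ^ (s + u) :=
    funext fun i => (Real.rpow_add (hν i) s u).symm
  rw [Tpow, Tpow, Tpow, Tmap_comp, h]

lemma Tpow_cancel (b : OrthonormalBasis (Fin d) ℝ Ed) {ν : Fin d → ℝ} (hν : ∀ i, 0 < ν i)
    (s : ℝ) (x : Ed) : Tpow b ν (-s) (Tpow b ν s x) = x := by
  rw [Tpow_comp b hν, neg_add_cancel]
  have h : (fun i => ν i ^ (0:ℝ)) = fun _ : Fin d => (1:ℝ) :=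
    funext fun i => Real.rpow_zero _
  rw [Tpow, h]
  exact Tmap_one b x

lemma preimage_Tpow_preimage (b : OrthonormalBasis (Fin d) ℝ Ed) {ν : Fin d → ℝ}
    (hν : ∀ i, 0 < ν i) (s : ℝ) (E : Set Ed) :
    Tpow b ν s ⁻¹' (Tpow b ν (-s) ⁻¹' E) = E := by
  ext x
  simp only [Set.mem_preimage]
  rw [Tpow_cancel b hν]

/-! ### volumes -/

lemma vol_preimage_Tmap (b : OrthonormalBasis (Fin d) ℝ Ed) {κ : Fin d → ℝ}
    (hκ : ∀ i, 0 < κ i) (S : Set Ed) :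
    volume (Tmap b κ ⁻¹' S) = ENNReal.ofReal ((∏ i, κ i)⁻¹) * volume S := by
  have hprod : 0 < ∏ i, κ i := Finset.prod_pos fun i _ => hκ i
  have hdet : LinearMap.det (Tmap b κ) ≠ 0 := by
    rw [det_Tmap]; exact hprod.ne'
  rw [MeasureTheory.Measure.addHaar_preimage_linearMap volume hdet S, det_Tmap,
    abs_of_pos (inv_pos.mpr hprod)]

def Gset (b : OrthonormalBasis (Fin d) ℝ Ed) (ν : Fin d → ℝ) (s : ℝ) (r : ℝ) : Set Ed :=
  Tpow b ν s ⁻¹' ball 0 r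

lemma mem_Gset (b : OrthonormalBasis (Fin d) ℝ Ed) (ν : Fin d → ℝ) (s r : ℝ) (x : Ed) :
    x ∈ Gset b ν s r ↔ ‖Tpow b ν s x‖ < r := by
  rw [Gset, Set.mem_preimage, mem_ball_zero_iff]

lemma vol_Gset (b : OrthonormalBasis (Fin d) ℝ Ed) {ν : Fin d → ℝ} (hν : ∀ i, 0 < ν i)
    (s r : ℝ) :
    volume (Gset b ν s r) =
      ENNReal.ofReal ((∏ i, ν i ^ s)⁻¹) * volume (ball (0 : Ed) r) :=
  vol_preimage_Tmap b (fun i => Real.rpow_pos_of_pos (hν i) s) _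

lemma vol_Gset_pos (b : OrthonormalBasis (Fin d) ℝ Ed) {ν : Fin d → ℝ} (hν : ∀ i, 0 < ν i)
    (s : ℝ) {r : ℝ} (hr : 0 < r) : 0 < volume (Gset b ν s r) := by
  rw [vol_Gset b hν]
  apply ENNReal.mul_pos
  · simp only [ne_eq, ENNReal.ofReal_eq_zero, not_le]
    exact inv_pos.mpr (Finset.prod_pos fun i _ => Real.rpow_pos_of_pos (hν i) s)
  · exact (measure_ball_pos volume 0 hr).ne'

lemma vol_Gset_ne_top (b : OrthonormalBasis (Fin d) ℝ Ed) {ν : Fin d → ℝ} (hν : ∀ i, 0 < ν i)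
    (s r : ℝ) : volume (Gset b ν s r) ≠ ⊤ := by
  rw [vol_Gset b hν]
  exact ENNReal.mul_ne_top ENNReal.ofReal_ne_top measure_ball_lt_top.ne

lemma Gset_anti (b : OrthonormalBasis (Fin d) ℝ Ed) {ν : Fin d → ℝ} (hν : ∀ i, 1 < ν i)
    {s u : ℝ} (hsu : s ≤ u) (r : ℝ) : Gset b ν u r ⊆ Gset b ν s r := by
  intro x hx
  rw [mem_Gset] at hx ⊢
  refine lt_of_le_of_lt ?_ hx
  apply norm_Tmap_le_norm_Tmap
  intro i
  have h1 : (0:ℝ) < ν i := lt_trans one_pos (hν i)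
  rw [abs_of_pos (Real.rpow_pos_of_pos h1 s), abs_of_pos (Real.rpow_pos_of_pos h1 u)]
  exact Real.rpow_le_rpow_of_exponent_le (hν i).le hsu

/-! ### the minimal-eigenvalue function rho -/

def rho (b : OrthonormalBasis (Fin d) ℝ Ed) (κ : Fin d → ℝ) (v : Ed) : ℝ :=
  sInf (κ '' {i | b.repr v i ≠ 0})

lemma exists_repr_ne_zero (b : OrthonormalBasis (Fin d) ℝ Ed) {v : Ed} (hv : v ≠ 0) :
    ∃ i, b.repr v i ≠ 0 := by
  by_contra h
  push_neg at h
  apply hv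
  have : b.repr v = 0 := by
    refine (WithLp.equiv 2 (Fin d → ℝ)).injective (funext fun i => ?_)
    simpa using h i
  have := congrArg b.repr.symm this
  simpa using this

lemma rho_le (b : OrthonormalBasis (Fin d) ℝ Ed) (κ : Fin d → ℝ) {v : Ed} {i : Fin d}
    (hi : b.repr v i ≠ 0) : rho b κ v ≤ κ i :=
  csInf_le ((Set.toFinite _).bddBelow) ⟨i, hi, rfl⟩

lemma exists_rho_eq (b : OrthonormalBasis (Fin d) ℝ Ed) (κ : Fin d → ℝ) {v : Ed} (hv : v ≠ 0) :
    ∃ i, b.repr v i ≠ 0 ∧ κ i = rho b κ v := by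
  have hne : (κ '' {i | b.repr v i ≠ 0}).Nonempty := by
    obtain ⟨i, hi⟩ := exists_repr_ne_zero b hv
    exact ⟨κ i, i, hi, rfl⟩
  have hmem : sInf (κ '' {i | b.repr v i ≠ 0}) ∈ κ '' {i | b.repr v i ≠ 0} :=
    hne.csInf_mem (Set.toFinite _)
  obtain ⟨i, hi, hval⟩ := hmem
  exact ⟨i, hi, hval⟩

lemma one_lt_rho (b : OrthonormalBasis (Fin d) ℝ Ed) {κ : Fin d → ℝ} (hκ : ∀ i, 1 < κ i)
    {v : Ed} (hv : v ≠ 0) : 1 < rho b κ v := by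
  obtain ⟨i, _, hval⟩ := exists_rho_eq b κ hv
  rw [← hval]; exact hκ i

lemma rho_basis (b : OrthonormalBasis (Fin d) ℝ Ed) (κ : Fin d → ℝ) (i : Fin d) :
    rho b κ (b i) = κ i := by
  have hset : {j | b.repr (b i) j ≠ 0} = {i} := by
    ext j
    simp only [Set.mem_setOf_eq, Set.mem_singleton_iff, b.repr_self,
      EuclideanSpace.single_apply]
    rcases eq_or_ne j i with rfl | hj
    · simp
    · simp [hj]
  rw [rho, hset, Set.image_singleton, csInf_singleton]


/-! ### decay estimates -/

lemma norm_Tpow_le_rho (b : OrthonormalBasis (Fin d) ℝ Ed) {ν : Fin d → ℝ}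
    (hν : ∀ i, 1 < ν i) (v : Ed) {s : ℝ} (hs : s ≤ 0) :
    ‖Tpow b ν s v‖ ≤ rho b ν v ^ s * ‖v‖ := by
  rcases eq_or_ne v 0 with rfl | hv
  · simp only [map_zero, norm_zero, mul_zero, le_refl]
  have hρ : 1 < rho b ν v := one_lt_rho b hν hv
  have hρ0 : (0:ℝ) < rho b ν v := lt_trans one_pos hρ
  have hρs : (0:ℝ) ≤ rho b ν v ^ s := (Real.rpow_pos_of_pos hρ0 s).le
  rw [Tpow, norm_Tmap, norm_eq_sqrt_repr b v]
  have key : ∑ i, (ν i ^ s * b.repr v i) ^ 2 ≤ (rho b ν v ^ s) ^ 2 * ∑ i, (b.repr v i) ^ 2 := by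
    rw [Finset.mul_sum]
    refine Finset.sum_le_sum fun i _ => ?_
    rcases eq_or_ne (b.repr v i) 0 with hz | hz
    · simp [hz]
    · have hle : rho b ν v ≤ ν i := rho_le b ν hz
      have h1 : ν i ^ s ≤ rho b ν v ^ s :=
        Real.rpow_le_rpow_of_nonpos hρ0 hle hs
      rw [mul_pow]
      exact mul_le_mul_of_nonneg_right
        (pow_le_pow_left₀ (Real.rpow_pos_of_pos (lt_trans one_pos (hν i)) s).le h1 2)
        (sq_nonneg _)
  calc Real.sqrt (∑ i, (ν i ^ s * b.repr v i) ^ 2)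
      ≤ Real.sqrt ((rho b ν v ^ s) ^ 2 * ∑ i, (b.repr v i) ^ 2) := Real.sqrt_le_sqrt key
    _ = rho b ν v ^ s * Real.sqrt (∑ i, (b.repr v i) ^ 2) := by
        rw [Real.sqrt_mul (sq_nonneg _), Real.sqrt_sq hρs]

lemma norm_Tpow_ge_coord (b : OrthonormalBasis (Fin d) ℝ Ed) {ν : Fin d → ℝ}
    (hν : ∀ i, 1 < ν i) (v : Ed) (i₀ : Fin d) (s : ℝ) :
    ν i₀ ^ s * |b.repr v i₀| ≤ ‖Tpow b ν s v‖ := by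
  have := abs_repr_le_norm b (Tpow b ν s v) i₀
  rwa [Tpow, repr_Tmap, abs_mul, abs_of_pos (Real.rpow_pos_of_pos (lt_trans one_pos (hν i₀)) s)]
    at this

/-! ### slab estimate -/

lemma pos_dim_of_ne_zero {w : Ed} (hw : w ≠ 0) : 0 < d := by
  rcases Nat.eq_zero_or_pos d with h | h
  · exfalso
    apply hw
    subst h
    exact (WithLp.equiv 2 (Fin 0 → ℝ)).injective (funext fun i => Fin.elim0 i)
  · exact h

lemma vol_slab_inter_ball {w : Ed} (hw : w ≠ 0) {δ r : ℝ} (hδ : 0 ≤ δ) (hr : 0 < r) :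
    volume ({y : Ed | |⟪y, w⟫| ≤ δ * ‖w‖} ∩ ball 0 r) ≤
      ENNReal.ofReal (2 * δ * (2 * r) ^ (d - 1)) := by
  classical
  have hd : 0 < d := pos_dim_of_ne_zero hw
  have hw0 : (0:ℝ) < ‖w‖ := norm_pos_iff.mpr hw
  have hwh1 : ‖(‖w‖⁻¹ • w : Ed)‖ = 1 := norm_smul_inv_norm hw
  have hi₀ : (⟨0, hd⟩ : Fin d) = ⟨0, hd⟩ := rfl
  have hcard : Module.finrank ℝ Ed = Fintype.card (Fin d) := by
    simp [finrank_euclideanSpace_fin]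
  have horth : Orthonormal ℝ
      (Set.restrict {(⟨0, hd⟩ : Fin d)} (fun _ : Fin d => (‖w‖⁻¹ • w : Ed))) := by
    rw [orthonormal_iff_ite]
    intro i j
    have hij : i = j := Subtype.ext (by
      have h1 := i.2
      have h2 := j.2
      simp only [Set.mem_singleton_iff] at h1 h2
      rw [h1, h2])
    subst hij
    rw [if_pos rfl]
    show (inner ℝ ((‖w‖⁻¹ • w : Ed)) ((‖w‖⁻¹ • w : Ed)) : ℝ) = 1
    rw [real_inner_self_eq_norm_mul_norm, hwh1]
    norm_num
  obtain ⟨b', hb'⟩ := Orthonormal.exists_orthonormalBasis_extension_of_card_eq hcard horth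
  have hb'i₀ : b' ⟨0, hd⟩ = ‖w‖⁻¹ • w := hb' ⟨0, hd⟩ rfl
  set B : Fin d → ℝ := fun i => if i = ⟨0, hd⟩ then δ else r with hB
  have hBnn : ∀ i, 0 ≤ B i := by
    intro i
    by_cases h : i = ⟨0, hd⟩ <;> simp [hB, h, hδ, hr.le]
  set PB : Set (EuclideanSpace ℝ (Fin d)) :=
    (MeasurableEquiv.toLp 2 (Fin d → ℝ)).symm ⁻¹' (Set.univ.pi fun i => Set.Icc (-(B i)) (B i))
    with hPB
  have hmemPB : ∀ z : EuclideanSpace ℝ (Fin d),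
      z ∈ PB ↔ ∀ i, |z i| ≤ B i := by
    intro z
    simp only [hPB, Set.mem_preimage, Set.mem_pi, Set.mem_univ, forall_true_left,
      Set.mem_Icc, ← abs_le]
    rfl
  have hsub : {y : Ed | |⟪y, w⟫| ≤ δ * ‖w‖} ∩ ball 0 r ⊆ ⇑b'.repr ⁻¹' PB := by
    intro y hy
    obtain ⟨hy1, hy2⟩ := hy
    rw [Set.mem_preimage, hmemPB]
    intro i
    have hBi : B ⟨0, hd⟩ = δ := by simp [hB]
    have hBne : ∀ i : Fin d, i ≠ ⟨0, hd⟩ → B i = r := fun i h => by simp [hB, h]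
    by_cases h : i = ⟨0, hd⟩
    · subst h
      rw [hBi]
      have hrepr : b'.repr y ⟨0, hd⟩ = ⟪b' ⟨0, hd⟩, y⟫ := b'.repr_apply_apply y _
      have hcomm : (inner ℝ w y : ℝ) = inner ℝ y w := real_inner_comm y w
      rw [hrepr, hb'i₀, real_inner_smul_left, abs_mul, abs_of_pos (inv_pos.mpr hw0), hcomm]
      calc ‖w‖⁻¹ * |⟪y, w⟫| ≤ ‖w‖⁻¹ * (δ * ‖w‖) :=
            mul_le_mul_of_nonneg_left hy1 (inv_pos.mpr hw0).le
        _ = δ := by field_simp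
    · rw [hBne i h]
      calc |b'.repr y i| ≤ ‖y‖ := abs_repr_le_norm b' y i
        _ ≤ r := (mem_ball_zero_iff.mp hy2).le
  have hPBmeas : MeasurableSet PB :=
    (MeasurableEquiv.toLp 2 (Fin d → ℝ)).symm.measurable
      (MeasurableSet.univ_pi fun i => measurableSet_Icc)
  have step1 : volume (⇑b'.repr ⁻¹' PB) = volume PB :=
    b'.measurePreserving_repr.measure_preimage hPBmeas.nullMeasurableSet
  have step2 : volume PB = ∏ i, volume (Set.Icc (-(B i)) (B i)) := by
    rw [hPB, (EuclideanSpace.volume_preserving_symm_measurableEquiv_toLp (Fin d)).measure_preimage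
      (MeasurableSet.univ_pi fun i => measurableSet_Icc).nullMeasurableSet]
    exact volume_pi_pi _
  have step3 : ∏ i, volume (Set.Icc (-(B i)) (B i)) = ENNReal.ofReal (∏ i, (2 * B i)) := by
    rw [ENNReal.ofReal_prod_of_nonneg (fun i _ => by positivity)]
    refine Finset.prod_congr rfl fun i _ => ?_
    rw [Real.volume_Icc]
    congr 1
    ring
  have step4 : (∏ i, (2 * B i)) = 2 * δ * (2 * r) ^ (d - 1) := by
    rw [← Finset.mul_prod_erase Finset.univ _ (Finset.mem_univ (⟨0, hd⟩ : Fin d))]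
    have h1 : 2 * B ⟨0, hd⟩ = 2 * δ := by simp [hB]
    have h2 : ∏ i ∈ Finset.univ.erase (⟨0, hd⟩ : Fin d), (2 * B i) = (2 * r) ^ (d - 1) := by
      rw [Finset.prod_congr rfl (fun i hi => ?_), Finset.prod_const,
        Finset.card_erase_of_mem (Finset.mem_univ _), Finset.card_univ, Fintype.card_fin]
      simp [hB, Finset.mem_erase.mp hi |>.1]
    rw [h1, h2]
  calc volume ({y : Ed | |⟪y, w⟫| ≤ δ * ‖w‖} ∩ ball 0 r)
      ≤ volume (⇑b'.repr ⁻¹' PB) := measure_mono hsub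
    _ = ENNReal.ofReal (2 * δ * (2 * r) ^ (d - 1)) := by rw [step1, step2, step3, step4]


/-! ### cap estimate -/

lemma cap_subset {w : Ed} (hw : w ≠ 0) :
    ball ((3/4 : ℝ) • (‖w‖⁻¹ • w)) (1/8) ⊆
      {y : Ed | 2⁻¹ * ‖w‖ ≤ |⟪y, w⟫|} ∩ ball 0 1 := by
  intro y hy
  have hw0 : (0:ℝ) < ‖w‖ := norm_pos_iff.mpr hw
  set c : Ed := (3/4 : ℝ) • (‖w‖⁻¹ • w) with hc
  have hcn : ‖c‖ = 3/4 := by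
    rw [hc, norm_smul, norm_smul]
    simp [abs_of_pos hw0, abs_of_nonneg, inv_mul_cancel₀ hw0.ne']
  have hyc : ‖y - c‖ < 1/8 := by
    rw [← dist_eq_norm]
    exact mem_ball.mp hy
  constructor
  · have hcw : ⟪c, w⟫ = (3/4 : ℝ) * ‖w‖ := by
      rw [hc, real_inner_smul_left, real_inner_smul_left, real_inner_self_eq_norm_mul_norm]
      field_simp
    have hsub : |⟪y - c, w⟫| ≤ (1/8 : ℝ) * ‖w‖ := by
      calc |⟪y - c, w⟫| ≤ ‖y - c‖ * ‖w‖ := abs_real_inner_le_norm _ _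
        _ ≤ (1/8 : ℝ) * ‖w‖ := mul_le_mul_of_nonneg_right hyc.le hw0.le
    have hid : ⟪y, w⟫ = ⟪c, w⟫ + ⟪y - c, w⟫ := by
      rw [inner_sub_left]
      ring
    have h1 : ⟪y, w⟫ ≥ (3/4 : ℝ) * ‖w‖ - (1/8 : ℝ) * ‖w‖ := by
      rw [hid, hcw]
      have := neg_abs_le (⟪y - c, w⟫ : ℝ)
      linarith
    have h2 : (2⁻¹ : ℝ) * ‖w‖ ≤ ⟪y, w⟫ := by nlinarith
    exact le_trans h2 (le_abs_self _)
  · rw [mem_ball_zero_iff]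
    have hyid : y = y - c + c := (sub_add_cancel y c).symm
    calc ‖y‖ = ‖y - c + c‖ := by rw [← hyid]
      _ ≤ ‖y - c‖ + ‖c‖ := norm_add_le _ _
      _ < 1/8 + 3/4 := by rw [hcn]; linarith
      _ < 1 := by norm_num

/-! ### spectral bridge -/

lemma abs_eigenvalue_gt (A : Ed →ₗ[ℝ] Ed) (hexp : IsExpansive A) {μr : ℝ}
    (h : Module.End.HasEigenvalue A μr) : 1 < |μr| := by
  have h1 : (minpoly ℝ A).IsRoot μr := Module.End.hasEigenvalue_iff_isRoot.mp h
  have h2 : (LinearMap.charpoly A).IsRoot μr := by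
    obtain ⟨q, hq⟩ := LinearMap.minpoly_dvd_charpoly A
    rw [Polynomial.IsRoot, hq, Polynomial.eval_mul, h1.eq_zero, zero_mul]
  have h3 : (Polynomial.map (algebraMap ℝ ℂ) (LinearMap.charpoly A)).IsRoot (μr : ℂ) := by
    rw [Polynomial.IsRoot, Polynomial.eval_map]
    have hcoe : ((μr : ℂ)) = algebraMap ℝ ℂ μr := rfl
    rw [hcoe, Polynomial.eval₂_at_apply, h2.eq_zero, map_zero]
  have := hexp _ h3
  rwa [Complex.norm_real, Real.norm_eq_abs] at this

def eb (A : Ed →ₗ[ℝ] Ed) (hsym : A.IsSymmetric) : OrthonormalBasis (Fin d) ℝ Ed :=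
  hsym.eigenvectorBasis finrank_euclideanSpace_fin

def ev (A : Ed →ₗ[ℝ] Ed) (hsym : A.IsSymmetric) : Fin d → ℝ :=
  hsym.eigenvalues finrank_euclideanSpace_fin

def nu (A : Ed →ₗ[ℝ] Ed) (hsym : A.IsSymmetric) : Fin d → ℝ := fun i => |ev A hsym i|

lemma A_apply_eb (A : Ed →ₗ[ℝ] Ed) (hsym : A.IsSymmetric) (i : Fin d) :
    A (eb A hsym i) = ev A hsym i • eb A hsym i := by
  have := hsym.apply_eigenvectorBasis finrank_euclideanSpace_fin i
  simpa [eb, ev] using this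

lemma one_lt_nu (A : Ed →ₗ[ℝ] Ed) (hsym : A.IsSymmetric) (hexp : IsExpansive A) (i : Fin d) :
    1 < nu A hsym i :=
  abs_eigenvalue_gt A hexp (hsym.hasEigenvalue_eigenvalues finrank_euclideanSpace_fin i)

lemma nu_pos (A : Ed →ₗ[ℝ] Ed) (hsym : A.IsSymmetric) (hexp : IsExpansive A) (i : Fin d) :
    0 < nu A hsym i := lt_trans one_pos (one_lt_nu A hsym hexp i)

lemma A_eq_Tmap (A : Ed →ₗ[ℝ] Ed) (hsym : A.IsSymmetric) : A = Tmap (eb A hsym) (ev A hsym) := by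
  refine Module.Basis.ext (eb A hsym).toBasis fun i => ?_
  rw [OrthonormalBasis.coe_toBasis, A_apply_eb, Tmap_basis]

lemma pow_A_eq (A : Ed →ₗ[ℝ] Ed) (hsym : A.IsSymmetric) (j : ℕ) :
    (A ^ j : Ed →ₗ[ℝ] Ed) = Tmap (eb A hsym) (fun i => ev A hsym i ^ j) := by
  induction j with
  | zero =>
    refine LinearMap.ext fun x => ?_
    rw [pow_zero]
    have h1 : ((1 : Ed →ₗ[ℝ] Ed)) x = x := rfl
    rw [h1]
    have h2 : (fun i : Fin d => ev A hsym i ^ (0:ℕ)) = fun _ : Fin d => (1:ℝ) := by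
      funext i; rw [pow_zero]
    rw [h2]
    exact (Tmap_one _ x).symm
  | succ n ih =>
    refine LinearMap.ext fun x => ?_
    rw [pow_succ, Module.End.mul_apply, ih]
    rw [show A x = Tmap (eb A hsym) (ev A hsym) x from by rw [← A_eq_Tmap A hsym]]
    rw [Tmap_comp]
    have hfn : (fun i => ev A hsym i ^ n * ev A hsym i) = fun i => ev A hsym i ^ (n + 1) := by
      funext i
      rw [pow_succ]
    rw [hfn]

lemma preimage_pow_ball (A : Ed →ₗ[ℝ] Ed) (hsym : A.IsSymmetric) (j : ℕ) (r : ℝ) :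
    ⇑(A ^ j) ⁻¹' ball 0 r = Gset (eb A hsym) (nu A hsym) (j : ℝ) r := by
  ext x
  rw [Set.mem_preimage, mem_ball_zero_iff, mem_Gset]
  have : ‖(A ^ j) x‖ = ‖Tpow (eb A hsym) (nu A hsym) (j:ℝ) x‖ := by
    rw [pow_A_eq A hsym j, Tpow]
    refine norm_Tmap_congr _ (fun i => ?_) x
    rw [Real.rpow_natCast, abs_pow, nu, abs_pow, abs_abs]
  rw [this]

lemma conv_eq_Tmap (A : Ed →ₗ[ℝ] Ed) (hsym : A.IsSymmetric) (C : Ed ≃ₗ[ℝ] Ed) (lam : Fin d → ℝ)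
    (hA : ∀ (x : Ed) (i : Fin d), (C.symm (A x)) i = lam i * (C.symm x) i)
    (φ : ℝ → ℝ) (x : Ed) :
    C ((WithLp.equiv 2 (Fin d → ℝ)).symm fun i => φ (lam i) * (C.symm x) i) =
      Tmap (eb A hsym) (fun i => φ (ev A hsym i)) x := by
  have key : (C.toLinearMap ∘ₗ (diagMap (fun i => φ (lam i))) ∘ₗ (C.symm : Ed ≃ₗ[ℝ] Ed).toLinearMap)
      = Tmap (eb A hsym) (fun i => φ (ev A hsym i)) := by
    refine Module.Basis.ext (eb A hsym).toBasis fun i => ?_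
    rw [OrthonormalBasis.coe_toBasis]
    have heig : A (eb A hsym i) = ev A hsym i • eb A hsym i := A_apply_eb A hsym i
    have hy : ∀ j, lam j * (C.symm (eb A hsym i)) j = ev A hsym i * (C.symm (eb A hsym i)) j := by
      intro j
      have h1 := hA (eb A hsym i) j
      rw [heig, _root_.map_smul] at h1
      simpa using h1.symm
    have hdiag : diagMap (fun j => φ (lam j)) (C.symm (eb A hsym i)) =
        φ (ev A hsym i) • (C.symm (eb A hsym i)) := by
      refine (WithLp.equiv 2 (Fin d → ℝ)).injective (funext fun j => ?_)
      simp only [WithLp.equiv_apply, diagMap_apply, PiLp.smul_apply, smul_eq_mul]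
      rcases eq_or_ne ((C.symm (eb A hsym i)) j) 0 with hz | hz
      · rw [hz, mul_zero, mul_zero]
      · have hlj : lam j = ev A hsym i := mul_right_cancel₀ hz (hy j)
        rw [hlj]
    rw [LinearMap.comp_apply, LinearMap.comp_apply]
    have hCsymm : ((C.symm : Ed ≃ₗ[ℝ] Ed).toLinearMap) (eb A hsym i) = C.symm (eb A hsym i) := rfl
    rw [hCsymm, hdiag, _root_.map_smul, Tmap_basis]
    congr 1
    exact C.apply_symm_apply _
  have happ := congrArg (fun (L : Ed →ₗ[ℝ] Ed) => L x) key
  exact happ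


/-! ### ENNReal ratio machinery -/

lemma ratio_add_compl {E S : Set Ed} (hE : MeasurableSet E) (h0 : volume S ≠ 0)
    (hT : volume S ≠ ⊤) :
    volume (E ∩ S) / volume S + volume (S \ E) / volume S = 1 := by
  rw [← ENNReal.add_div, Set.inter_comm, measure_inter_add_diff S hE, ENNReal.div_self h0 hT]

lemma ratio_eq_one_sub {E S : Set Ed} (hE : MeasurableSet E) (h0 : volume S ≠ 0)
    (hT : volume S ≠ ⊤) :
    volume (E ∩ S) / volume S = 1 - volume (S \ E) / volume S :=
  ENNReal.eq_sub_of_add_eq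
    ((ENNReal.div_lt_top (ne_top_of_le_ne_top hT (measure_mono Set.diff_subset)) h0).ne)
    (ratio_add_compl hE h0 hT)

lemma ratioc_eq_one_sub {E S : Set Ed} (hE : MeasurableSet E) (h0 : volume S ≠ 0)
    (hT : volume S ≠ ⊤) :
    volume (S \ E) / volume S = 1 - volume (E ∩ S) / volume S :=
  ENNReal.eq_sub_of_add_eq
    ((ENNReal.div_lt_top (ne_top_of_le_ne_top hT (measure_mono Set.inter_subset_right)) h0).ne)
    (by rw [add_comm]; exact ratio_add_compl hE h0 hT)

lemma tendsto_ratio_of_compl {E : Set Ed} (hE : MeasurableSet E) {S : ℕ → Set Ed}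
    (h0 : ∀ k, volume (S k) ≠ 0) (hT : ∀ k, volume (S k) ≠ ⊤)
    (h : Tendsto (fun k => volume (S k \ E) / volume (S k)) atTop (𝓝 0)) :
    Tendsto (fun k => volume (E ∩ S k) / volume (S k)) atTop (𝓝 1) := by
  have hco : Tendsto (fun x : ℝ≥0∞ => 1 - x) (𝓝 0) (𝓝 (1 - 0)) :=
    (ENNReal.continuous_sub_left ENNReal.one_ne_top).tendsto 0
  have := hco.comp h
  rw [tsub_zero] at this
  refine this.congr fun k => ?_
  exact (ratio_eq_one_sub hE (h0 k) (hT k)).symm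

lemma tendsto_compl_of_ratio {E : Set Ed} (hE : MeasurableSet E) {S : ℕ → Set Ed}
    (h0 : ∀ k, volume (S k) ≠ 0) (hT : ∀ k, volume (S k) ≠ ⊤)
    (h : Tendsto (fun k => volume (E ∩ S k) / volume (S k)) atTop (𝓝 1)) :
    Tendsto (fun k => volume (S k \ E) / volume (S k)) atTop (𝓝 0) := by
  have hco : Tendsto (fun x : ℝ≥0∞ => 1 - x) (𝓝 1) (𝓝 (1 - 1)) :=
    (ENNReal.continuous_sub_left ENNReal.one_ne_top).tendsto 1
  have := hco.comp h
  rw [tsub_self] at this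
  refine this.congr fun k => ?_
  exact (ratioc_eq_one_sub hE (h0 k) (hT k)).symm

/-! ### measurability of the test sets -/

lemma measurable_testSet (u v : Ed) {γ : ℝ} (hγ : 0 < γ) :
    MeasurableSet {x : Ed | |⟪x, v⟫| ≤ |⟪x, u⟫| ^ γ} := by
  have hcont1 : Continuous fun x : Ed => |⟪x, v⟫| :=
    (continuous_id.inner continuous_const).abs
  have hcont2 : Continuous fun x : Ed => |⟪x, u⟫| ^ γ := by
    have h1 : Continuous fun t : ℝ => t ^ γ := Real.continuous_rpow_const hγ.le
    exact h1.comp (continuous_id.inner continuous_const).abs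
  exact (isClosed_le hcont1 hcont2).measurableSet

/-! ### change of variables for the ratio -/

lemma ratio_compl_eq (b : OrthonormalBasis (Fin d) ℝ Ed) {ν : Fin d → ℝ}
    (hν : ∀ i, 1 < ν i) (E : Set Ed) (j : ℕ) (r : ℝ) :
    volume (Gset b ν j r \ E) / volume (Gset b ν j r) =
      volume (ball (0:Ed) r \ (Tpow b ν (-(j:ℝ)) ⁻¹' E)) / volume (ball (0:Ed) r) := by
  have hνp : ∀ i, 0 < ν i := fun i => lt_trans one_pos (hν i)
  have hEeq : E = Tpow b ν (j:ℝ) ⁻¹' (Tpow b ν (-(j:ℝ)) ⁻¹' E) :=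
    (preimage_Tpow_preimage b hνp (j:ℝ) E).symm
  have hdiff : Gset b ν j r \ E =
      Tpow b ν (j:ℝ) ⁻¹' (ball (0:Ed) r \ (Tpow b ν (-(j:ℝ)) ⁻¹' E)) := by
    conv_lhs => rw [hEeq]
    rw [Gset, ← Set.preimage_diff]
  have hκ : ∀ i, 0 < ν i ^ (j:ℝ) := fun i => Real.rpow_pos_of_pos (hνp i) _
  rw [hdiff, Gset, Tpow, vol_preimage_Tmap b hκ, vol_preimage_Tmap b hκ,
    ENNReal.mul_div_mul_left _ _ (by
      simp only [ne_eq, ENNReal.ofReal_eq_zero, not_le]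
      exact inv_pos.mpr (Finset.prod_pos fun i _ => hκ i)) ENNReal.ofReal_ne_top]


/-! ### eventual slab inclusion -/

lemma eventual_slab (b : OrthonormalBasis (Fin d) ℝ Ed) {ν : Fin d → ℝ}
    (hν : ∀ i, 1 < ν i) {u v : Ed} (hu : u ≠ 0) (hv : v ≠ 0)
    {γ : ℝ} (hγ : 0 < γ) (hlt : rho b ν u ^ γ < rho b ν v) {r : ℝ} (hr : 0 < r)
    {δ : ℝ} (hδ : 0 < δ) :
    ∀ᶠ j : ℕ in atTop, ∀ y : Ed, y ∈ ball (0:Ed) r →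
      y ∉ Tpow b ν (-(j:ℝ)) ⁻¹' {x : Ed | |⟪x, v⟫| ≤ |⟪x, u⟫| ^ γ} →
      |⟪y, Tpow b ν (-(j:ℝ)) u⟫| ≤ δ * ‖Tpow b ν (-(j:ℝ)) u‖ := by
  obtain ⟨i₀, hi₀ne, hi₀eq⟩ := exists_rho_eq b ν hu
  set ρu := rho b ν u with hρu
  set ρv := rho b ν v with hρv
  have hρu1 : 1 < ρu := one_lt_rho b hν hu
  have hρv1 : 1 < ρv := one_lt_rho b hν hv
  have hρu0 : (0:ℝ) < ρu := lt_trans one_pos hρu1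
  have hρv0 : (0:ℝ) < ρv := lt_trans one_pos hρv1
  set m : ℝ := |b.repr u i₀| with hm
  have hm0 : 0 < m := abs_pos.mpr hi₀ne
  set X : ℝ := ρu ^ γ with hX
  have hX0 : 0 < X := Real.rpow_pos_of_pos hρu0 γ
  set K : ℝ := δ ^ γ * m ^ γ with hK
  have hK0 : 0 < K := mul_pos (Real.rpow_pos_of_pos hδ γ) (Real.rpow_pos_of_pos hm0 γ)
  set q : ℝ := X / ρv with hq
  have hq0 : 0 ≤ q := (div_pos hX0 hρv0).le
  have hq1 : q < 1 := (div_lt_one hρv0).mpr hlt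
  have hvnorm : 0 ≤ ‖v‖ := norm_nonneg v
  -- eventually r * ‖v‖ * q ^ j < K
  have hev : ∀ᶠ j : ℕ in atTop, r * ‖v‖ * q ^ j < K := by
    have h1 : Tendsto (fun j : ℕ => r * ‖v‖ * q ^ j) atTop (𝓝 (r * ‖v‖ * 0)) :=
      (tendsto_pow_atTop_nhds_zero_of_lt_one hq0 hq1).const_mul _
    rw [mul_zero] at h1
    exact h1.eventually_lt_const hK0
  filter_upwards [hev] with j hj y hyball hynot
  by_contra hcon
  push_neg at hcon
  apply hynot
  -- notation
  set aj : Ed := Tpow b ν (-(j:ℝ)) v with haj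
  set cj : Ed := Tpow b ν (-(j:ℝ)) u with hcj
  -- key inequality : r * ‖aj‖ ≤ (δ * ‖cj‖)^γ
  have hnaj : ‖aj‖ ≤ ρv ^ (-(j:ℝ)) * ‖v‖ :=
    norm_Tpow_le_rho b hν v (by simp : -(j:ℝ) ≤ 0)
  have hncj : ρu ^ (-(j:ℝ)) * m ≤ ‖cj‖ := by
    have := norm_Tpow_ge_coord b hν u i₀ (-(j:ℝ))
    rwa [hi₀eq] at this
  have hcj0 : (0:ℝ) < ρu ^ (-(j:ℝ)) * m :=
    mul_pos (Real.rpow_pos_of_pos hρu0 _) hm0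
  -- power identities
  have hXj : X ^ (-(j:ℝ)) = (X ^ j)⁻¹ := by
    rw [Real.rpow_neg hX0.le, Real.rpow_natCast]
  have hρvj : ρv ^ (-(j:ℝ)) = (ρv ^ j)⁻¹ := by
    rw [Real.rpow_neg hρv0.le, Real.rpow_natCast]
  have hqpow : q ^ j = X ^ j / ρv ^ j := by rw [hq, div_pow]
  have hinv : (ρv ^ j)⁻¹ = q ^ j * (X ^ j)⁻¹ := by
    rw [hqpow]
    field_simp
  have hkey : r * ‖aj‖ ≤ (δ * ‖cj‖) ^ γ := by
    have hXjpos : (0:ℝ) < X ^ j := pow_pos hX0 j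
    have step1 : r * ‖aj‖ ≤ r * ‖v‖ * (ρv ^ j)⁻¹ := by
      calc r * ‖aj‖ ≤ r * (ρv ^ (-(j:ℝ)) * ‖v‖) :=
            mul_le_mul_of_nonneg_left hnaj hr.le
        _ = r * ‖v‖ * (ρv ^ j)⁻¹ := by rw [hρvj]; ring
    have step2 : r * ‖v‖ * (ρv ^ j)⁻¹ ≤ K * (X ^ j)⁻¹ := by
      calc r * ‖v‖ * (ρv ^ j)⁻¹ = r * ‖v‖ * q ^ j * (X ^ j)⁻¹ := by rw [hinv]; ring
        _ ≤ K * (X ^ j)⁻¹ :=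
            mul_le_mul_of_nonneg_right hj.le (inv_nonneg.mpr hXjpos.le)
    have e1 : (ρu ^ (-(j:ℝ))) ^ γ = ρu ^ ((-(j:ℝ)) * γ) := (Real.rpow_mul hρu0.le _ _).symm
    have e2 : (X ^ j : ℝ)⁻¹ = ρu ^ (γ * (-(j:ℝ))) := by
      rw [Real.rpow_mul hρu0.le, ← hX, Real.rpow_neg hX0.le, Real.rpow_natCast]
    have step3 : K * (X ^ j)⁻¹ ≤ (δ * ‖cj‖) ^ γ := by
      have h2 : δ * (ρu ^ (-(j:ℝ)) * m) ≤ δ * ‖cj‖ :=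
        mul_le_mul_of_nonneg_left hncj hδ.le
      have h3 : (δ * (ρu ^ (-(j:ℝ)) * m)) ^ γ ≤ (δ * ‖cj‖) ^ γ :=
        Real.rpow_le_rpow (by positivity) h2 hγ.le
      have h4 : (δ * (ρu ^ (-(j:ℝ)) * m)) ^ γ = K * (X ^ j)⁻¹ := by
        calc (δ * (ρu ^ (-(j:ℝ)) * m)) ^ γ = ((δ * m) * ρu ^ (-(j:ℝ))) ^ γ := by
              rw [show δ * (ρu ^ (-(j:ℝ)) * m) = (δ * m) * ρu ^ (-(j:ℝ)) by ring]
          _ = (δ * m) ^ γ * (ρu ^ (-(j:ℝ))) ^ γ :=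
              Real.mul_rpow (by positivity) (Real.rpow_pos_of_pos hρu0 _).le
          _ = (δ ^ γ * m ^ γ) * ρu ^ ((-(j:ℝ)) * γ) := by
              rw [Real.mul_rpow hδ.le hm0.le, e1]
          _ = K * (X ^ j)⁻¹ := by rw [hK, e2, mul_comm (-(j:ℝ)) γ]
      rw [← h4]
      exact h3
    exact le_trans step1 (le_trans step2 step3)
  -- conclude membership
  show |⟪Tpow b ν (-(j:ℝ)) y, v⟫| ≤ |⟪Tpow b ν (-(j:ℝ)) y, u⟫| ^ γ
  have hswapv : ⟪Tpow b ν (-(j:ℝ)) y, v⟫ = ⟪y, aj⟫ := inner_Tmap b _ y v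
  have hswapu : ⟪Tpow b ν (-(j:ℝ)) y, u⟫ = ⟪y, cj⟫ := inner_Tmap b _ y u
  rw [hswapv, hswapu]
  have h5 : |⟪y, aj⟫| ≤ r * ‖aj‖ := by
    calc |⟪y, aj⟫| ≤ ‖y‖ * ‖aj‖ := abs_real_inner_le_norm _ _
      _ ≤ r * ‖aj‖ := mul_le_mul_of_nonneg_right (mem_ball_zero_iff.mp hyball).le (norm_nonneg _)
  have h6 : (δ * ‖cj‖) ^ γ ≤ |⟪y, cj⟫| ^ γ :=
    Real.rpow_le_rpow (by positivity) hcon.le hγ.le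
  calc |⟪y, aj⟫| ≤ r * ‖aj‖ := h5
    _ ≤ (δ * ‖cj‖) ^ γ := hkey
    _ ≤ |⟪y, cj⟫| ^ γ := h6


lemma Tpow_ne_zero (b : OrthonormalBasis (Fin d) ℝ Ed) {ν : Fin d → ℝ}
    (hν : ∀ i, 1 < ν i) {u : Ed} (hu : u ≠ 0) (s : ℝ) : Tpow b ν s u ≠ 0 := by
  obtain ⟨i₀, hi₀, _⟩ := exists_rho_eq b ν hu
  intro hzero
  have h1 := norm_Tpow_ge_coord b hν u i₀ s
  rw [hzero, norm_zero] at h1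
  have h2 : (0:ℝ) < ν i₀ ^ s * |b.repr u i₀| :=
    mul_pos (Real.rpow_pos_of_pos (lt_trans one_pos (hν i₀)) s) (abs_pos.mpr hi₀)
  linarith

theorem core_pos (b : OrthonormalBasis (Fin d) ℝ Ed) {ν : Fin d → ℝ}
    (hν : ∀ i, 1 < ν i) {u v : Ed} (hu : u ≠ 0) (hv : v ≠ 0)
    {γ : ℝ} (hγ : 0 < γ) (hlt : rho b ν u ^ γ < rho b ν v) {r : ℝ} (hr : 0 < r) :
    Tendsto (fun j : ℕ => volume ({x : Ed | |⟪x, v⟫| ≤ |⟪x, u⟫| ^ γ} ∩ Gset b ν j r) /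
      volume (Gset b ν j r)) atTop (𝓝 1) := by
  have hνp : ∀ i, 0 < ν i := fun i => lt_trans one_pos (hν i)
  set E := {x : Ed | |⟪x, v⟫| ≤ |⟪x, u⟫| ^ γ} with hEdef
  have hE : MeasurableSet E := measurable_testSet u v hγ
  apply tendsto_ratio_of_compl hE (fun j => (vol_Gset_pos b hνp _ hr).ne')
    (fun j => vol_Gset_ne_top b hνp _ _)
  rw [ENNReal.tendsto_nhds_zero]
  intro ε hε
  set V := volume (ball (0:Ed) r) with hVdef
  have hV0 : V ≠ 0 := (measure_ball_pos volume 0 hr).ne'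
  have hVT : V ≠ ⊤ := measure_ball_lt_top.ne
  set W : ℝ≥0∞ := min (ε * V) 1 with hWdef
  have hW0 : W ≠ 0 := by
    rw [hWdef]
    exact (lt_min (ENNReal.mul_pos hε.ne' hV0) zero_lt_one).ne'
  have hWT : W ≠ ⊤ := by
    rw [hWdef]
    exact ne_top_of_le_ne_top ENNReal.one_ne_top (min_le_right _ _)
  set c : ℝ := 2 * (2 * r) ^ (d - 1) with hcdef
  have hc0 : 0 < c := by positivity
  set δ : ℝ := W.toReal / (2 * c) with hδdef
  have hδ0 : 0 < δ := div_pos (ENNReal.toReal_pos hW0 hWT) (by positivity)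
  have hbound : ENNReal.ofReal (2 * δ * (2 * r) ^ (d - 1)) ≤ ε * V := by
    have h1 : 2 * δ * (2 * r) ^ (d - 1) = W.toReal / 2 := by
      rw [hδdef, hcdef]
      field_simp
    rw [h1]
    calc ENNReal.ofReal (W.toReal / 2) ≤ ENNReal.ofReal W.toReal := by
          apply ENNReal.ofReal_le_ofReal
          linarith [ENNReal.toReal_nonneg (a := W)]
      _ = W := ENNReal.ofReal_toReal hWT
      _ ≤ ε * V := min_le_left _ _
  filter_upwards [eventual_slab b hν hu hv hγ hlt hr hδ0] with j hj
  have hsub : ball (0:Ed) r \ (Tpow b ν (-(j:ℝ)) ⁻¹' E) ⊆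
      {y : Ed | |⟪y, Tpow b ν (-(j:ℝ)) u⟫| ≤ δ * ‖Tpow b ν (-(j:ℝ)) u‖} ∩ ball (0:Ed) r :=
    fun y hy => ⟨hj y hy.1 hy.2, hy.1⟩
  have hcjne : Tpow b ν (-(j:ℝ)) u ≠ 0 := Tpow_ne_zero b hν hu _
  calc volume (Gset b ν j r \ E) / volume (Gset b ν j r)
      = volume (ball (0:Ed) r \ (Tpow b ν (-(j:ℝ)) ⁻¹' E)) / V :=
        ratio_compl_eq b hν E j r
    _ ≤ ENNReal.ofReal (2 * δ * (2 * r) ^ (d - 1)) / V :=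
        ENNReal.div_le_div_right
          (le_trans (measure_mono hsub) (vol_slab_inter_ball hcjne hδ0.le hr)) _
    _ ≤ (ε * V) / V := ENNReal.div_le_div_right hbound _
    _ = ε := by rw [mul_div_assoc, ENNReal.div_self hV0 hVT, mul_one]

theorem core_neg (b : OrthonormalBasis (Fin d) ℝ Ed) {ν : Fin d → ℝ}
    (hν : ∀ i, 1 < ν i) {u v : Ed} (hu : u ≠ 0) (hv : v ≠ 0)
    {γ : ℝ} (hγ : 0 < γ) (hgt : rho b ν v < rho b ν u ^ γ) :
    ¬ Tendsto (fun j : ℕ => volume ({x : Ed | |⟪x, v⟫| ≤ |⟪x, u⟫| ^ γ} ∩ Gset b ν j 1) /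
      volume (Gset b ν j 1)) atTop (𝓝 1) := by
  intro hcon
  have hνp : ∀ i, 0 < ν i := fun i => lt_trans one_pos (hν i)
  set E := {x : Ed | |⟪x, v⟫| ≤ |⟪x, u⟫| ^ γ} with hEdef
  have hE : MeasurableSet E := measurable_testSet u v hγ
  have hcompl := tendsto_compl_of_ratio hE
    (fun j => (vol_Gset_pos b hνp _ one_pos).ne') (fun j => vol_Gset_ne_top b hνp _ _) hcon
  set c₁ : ℝ≥0∞ := volume (ball (0:Ed) (8⁻¹ : ℝ)) / volume (ball (0:Ed) 1) with hc₁def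
  have hc₁0 : 0 < c₁ :=
    ENNReal.div_pos (measure_ball_pos volume 0 (by norm_num)).ne' measure_ball_lt_top.ne
  -- spectral data
  obtain ⟨i₀, hi₀ne, hi₀eq⟩ := exists_rho_eq b ν hv
  set ρu := rho b ν u with hρu
  set ρv := rho b ν v with hρv
  have hρu1 : 1 < ρu := one_lt_rho b hν hu
  have hρv1 : 1 < ρv := one_lt_rho b hν hv
  have hρu0 : (0:ℝ) < ρu := lt_trans one_pos hρu1
  have hρv0 : (0:ℝ) < ρv := lt_trans one_pos hρv1
  set mv : ℝ := |b.repr v i₀| with hmv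
  have hmv0 : 0 < mv := abs_pos.mpr hi₀ne
  set X : ℝ := ρu ^ γ with hX
  have hX0 : 0 < X := Real.rpow_pos_of_pos hρu0 γ
  set q : ℝ := ρv / X with hq
  have hq0 : 0 ≤ q := (div_pos hρv0 hX0).le
  have hq1 : q < 1 := (div_lt_one hX0).mpr hgt
  have hev : ∀ᶠ j : ℕ in atTop, ‖u‖ ^ γ * q ^ j < 2⁻¹ * mv := by
    have h1 : Tendsto (fun j : ℕ => ‖u‖ ^ γ * q ^ j) atTop (𝓝 (‖u‖ ^ γ * 0)) :=
      (tendsto_pow_atTop_nhds_zero_of_lt_one hq0 hq1).const_mul _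
    rw [mul_zero] at h1
    exact h1.eventually_lt_const (by positivity)
  have hlow : ∀ᶠ j : ℕ in atTop,
      c₁ ≤ volume (Gset b ν j 1 \ E) / volume (Gset b ν j 1) := by
    filter_upwards [hev] with j hj
    set aj : Ed := Tpow b ν (-(j:ℝ)) v with haj
    set cj : Ed := Tpow b ν (-(j:ℝ)) u with hcj
    have hajne : aj ≠ 0 := Tpow_ne_zero b hν hv _
    -- key : ‖cj‖ ^ γ < 2⁻¹ * ‖aj‖
    have hkey : ‖cj‖ ^ γ < 2⁻¹ * ‖aj‖ := by
      have hXj : X ^ (-(j:ℝ)) = (X ^ j)⁻¹ := by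
        rw [Real.rpow_neg hX0.le, Real.rpow_natCast]
      have hρvj : ρv ^ (-(j:ℝ)) = (ρv ^ j)⁻¹ := by
        rw [Real.rpow_neg hρv0.le, Real.rpow_natCast]
      have hinv : (X ^ j : ℝ)⁻¹ = q ^ j * (ρv ^ j)⁻¹ := by
        rw [hq, div_pow]
        field_simp
      have h1 : ‖cj‖ ≤ ρu ^ (-(j:ℝ)) * ‖u‖ :=
        norm_Tpow_le_rho b hν u (by simp : -(j:ℝ) ≤ 0)
      have h2 : ‖cj‖ ^ γ ≤ (ρu ^ (-(j:ℝ)) * ‖u‖) ^ γ :=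
        Real.rpow_le_rpow (norm_nonneg _) h1 hγ.le
      have e2 : (ρu ^ (-(j:ℝ))) ^ γ = (X ^ j)⁻¹ := by
        rw [← Real.rpow_mul hρu0.le, mul_comm, Real.rpow_mul hρu0.le, ← hX,
          Real.rpow_neg hX0.le, Real.rpow_natCast]
      have h3 : (ρu ^ (-(j:ℝ)) * ‖u‖) ^ γ = ‖u‖ ^ γ * q ^ j * (ρv ^ j)⁻¹ := by
        rw [Real.mul_rpow (Real.rpow_pos_of_pos hρu0 _).le (norm_nonneg _), e2, hinv]
        ring
      have h4 : ‖u‖ ^ γ * q ^ j * (ρv ^ j)⁻¹ < 2⁻¹ * mv * (ρv ^ j)⁻¹ :=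
        mul_lt_mul_of_pos_right hj (inv_pos.mpr (pow_pos hρv0 j))
      have h5 : 2⁻¹ * mv * (ρv ^ j)⁻¹ ≤ 2⁻¹ * ‖aj‖ := by
        have h6 : ρv ^ (-(j:ℝ)) * mv ≤ ‖aj‖ := by
          have := norm_Tpow_ge_coord b hν v i₀ (-(j:ℝ))
          rwa [hi₀eq] at this
        rw [hρvj] at h6
        calc 2⁻¹ * mv * (ρv ^ j)⁻¹ = 2⁻¹ * ((ρv ^ j)⁻¹ * mv) := by ring
          _ ≤ 2⁻¹ * ‖aj‖ := by
              apply mul_le_mul_of_nonneg_left _ (by norm_num : (0:ℝ) ≤ 2⁻¹)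
              exact h6
      calc ‖cj‖ ^ γ ≤ (ρu ^ (-(j:ℝ)) * ‖u‖) ^ γ := h2
        _ = ‖u‖ ^ γ * q ^ j * (ρv ^ j)⁻¹ := h3
        _ < 2⁻¹ * mv * (ρv ^ j)⁻¹ := h4
        _ ≤ 2⁻¹ * ‖aj‖ := h5
    -- the cap sits inside the complement
    have hcap : ball ((3/4 : ℝ) • (‖aj‖⁻¹ • aj)) (1/8) ⊆
        ball (0:Ed) 1 \ (Tpow b ν (-(j:ℝ)) ⁻¹' E) := by
      intro y hy
      obtain ⟨hy1, hy2⟩ := cap_subset hajne hy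
      refine ⟨hy2, ?_⟩
      intro hmem
      rw [Set.mem_preimage, hEdef, Set.mem_setOf_eq, Tpow] at hmem
      rw [inner_Tmap b _ y v, inner_Tmap b _ y u] at hmem
      rw [show Tmap b (fun i => ν i ^ (-(j:ℝ))) v = aj from rfl,
        show Tmap b (fun i => ν i ^ (-(j:ℝ))) u = cj from rfl] at hmem
      have h7 : |⟪y, cj⟫| ^ γ ≤ ‖cj‖ ^ γ := by
        apply Real.rpow_le_rpow (abs_nonneg _) _ hγ.le
        calc |⟪y, cj⟫| ≤ ‖y‖ * ‖cj‖ := abs_real_inner_le_norm _ _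
          _ ≤ 1 * ‖cj‖ :=
              mul_le_mul_of_nonneg_right (mem_ball_zero_iff.mp hy2).le (norm_nonneg _)
          _ = ‖cj‖ := one_mul _
      have h8 : |⟪y, aj⟫| ≤ |⟪y, cj⟫| ^ γ := hmem
      have h9 : 2⁻¹ * ‖aj‖ ≤ |⟪y, aj⟫| := hy1
      linarith
    -- volume lower bound
    rw [ratio_compl_eq b hν E j 1]
    have h10 : volume (ball ((3/4 : ℝ) • (‖aj‖⁻¹ • aj)) (1/8)) =
        volume (ball (0:Ed) (8⁻¹:ℝ)) := by
      rw [Measure.addHaar_ball_center]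
      norm_num
    calc c₁ = volume (ball (0:Ed) (8⁻¹:ℝ)) / volume (ball (0:Ed) 1) := rfl
      _ ≤ volume (ball (0:Ed) 1 \ (Tpow b ν (-(j:ℝ)) ⁻¹' E)) / volume (ball (0:Ed) 1) := by
          apply ENNReal.div_le_div_right
          rw [← h10]
          exact measure_mono hcap
  have hsmall := hcompl.eventually_lt_const hc₁0
  obtain ⟨j, hj1, hj2⟩ := (hsmall.and hlow).exists
  exact absurd hj2 (not_le.mpr hj1)


/-! ### transfer lemma -/

theorem transfer (b : OrthonormalBasis (Fin d) ℝ Ed) {ν : Fin d → ℝ}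
    (hν : ∀ i, 1 < ν i) {E : Set Ed} (hE : MeasurableSet E)
    (σ s : ℕ → ℝ) (f : ℕ → ℕ) (hf : Tendsto f atTop atTop)
    (hle : ∀ k, σ (f k) ≤ s k) {Cb : ℝ} (hub : ∀ k, s k - σ (f k) ≤ Cb)
    {r : ℝ} (hr : 0 < r)
    (h : Tendsto (fun k => volume (E ∩ Gset b ν (σ k) r) / volume (Gset b ν (σ k) r))
      atTop (𝓝 1)) :
    Tendsto (fun k => volume (E ∩ Gset b ν (s k) r) / volume (Gset b ν (s k) r))
      atTop (𝓝 1) := by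
  have hνp : ∀ i, 0 < ν i := fun i => lt_trans one_pos (hν i)
  set Δ : ℝ≥0∞ := ENNReal.ofReal (∏ i, ν i ^ Cb) with hΔdef
  have hΔT : Δ ≠ ⊤ := ENNReal.ofReal_ne_top
  have hΔ0 : Δ ≠ 0 := by
    rw [hΔdef]
    simp only [ne_eq, ENNReal.ofReal_eq_zero, not_le]
    exact Finset.prod_pos fun i _ => Real.rpow_pos_of_pos (hνp i) _
  have hc := tendsto_compl_of_ratio hE (fun k => (vol_Gset_pos b hνp _ hr).ne')
    (fun k => vol_Gset_ne_top b hνp _ _) h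
  have hcf : Tendsto (fun k => volume (Gset b ν (σ (f k)) r \ E) /
      volume (Gset b ν (σ (f k)) r)) atTop (𝓝 0) := hc.comp hf
  have hbound : ∀ k, volume (Gset b ν (s k) r \ E) / volume (Gset b ν (s k) r) ≤
      Δ * (volume (Gset b ν (σ (f k)) r \ E) / volume (Gset b ν (σ (f k)) r)) := by
    intro k
    have hsub : Gset b ν (s k) r ⊆ Gset b ν (σ (f k)) r := Gset_anti b hν (hle k) r
    have hdenom : volume (Gset b ν (σ (f k)) r) ≤ Δ * volume (Gset b ν (s k) r) := by
      rw [vol_Gset b hνp, vol_Gset b hνp, hΔdef, ← mul_assoc, ← ENNReal.ofReal_mul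
        (Finset.prod_nonneg fun i _ => (Real.rpow_pos_of_pos (hνp i) _).le)]
      apply mul_le_mul_of_nonneg_right _ zero_le
      apply ENNReal.ofReal_le_ofReal
      have hA : (0:ℝ) < ∏ i, ν i ^ σ (f k) :=
        Finset.prod_pos fun i _ => Real.rpow_pos_of_pos (hνp i) _
      have hB : (0:ℝ) < ∏ i, ν i ^ s k :=
        Finset.prod_pos fun i _ => Real.rpow_pos_of_pos (hνp i) _
      have hkey : (∏ i, ν i ^ s k) ≤ (∏ i, ν i ^ Cb) * (∏ i, ν i ^ σ (f k)) := by
        rw [← Finset.prod_mul_distrib]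
        refine Finset.prod_le_prod (fun i _ => (Real.rpow_pos_of_pos (hνp i) _).le)
          (fun i _ => ?_)
        rw [← Real.rpow_add (hνp i)]
        exact Real.rpow_le_rpow_of_exponent_le (hν i).le (by linarith [hub k])
      rw [← div_eq_mul_inv, le_div_iff₀ hB, inv_mul_eq_div, div_le_iff₀ hA]
      exact hkey
    calc volume (Gset b ν (s k) r \ E) / volume (Gset b ν (s k) r)
        ≤ volume (Gset b ν (σ (f k)) r \ E) / volume (Gset b ν (s k) r) :=
          ENNReal.div_le_div_right (measure_mono (Set.diff_subset_diff_left hsub)) _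
      _ = Δ * volume (Gset b ν (σ (f k)) r \ E) / (Δ * volume (Gset b ν (s k) r)) :=
          (ENNReal.mul_div_mul_left _ _ hΔ0 hΔT).symm
      _ ≤ Δ * volume (Gset b ν (σ (f k)) r \ E) / volume (Gset b ν (σ (f k)) r) :=
          ENNReal.div_le_div_left hdenom _
      _ = Δ * (volume (Gset b ν (σ (f k)) r \ E) / volume (Gset b ν (σ (f k)) r)) := by
          rw [mul_div_assoc]
  have hΔ0' : Tendsto (fun k => Δ * (volume (Gset b ν (σ (f k)) r \ E) /
      volume (Gset b ν (σ (f k)) r))) atTop (𝓝 (Δ * 0)) :=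
    ENNReal.Tendsto.const_mul hcf (Or.inr hΔT)
  rw [mul_zero] at hΔ0'
  have hczero : Tendsto (fun k => volume (Gset b ν (s k) r \ E) /
      volume (Gset b ν (s k) r)) atTop (𝓝 0) :=
    tendsto_of_tendsto_of_tendsto_of_le_of_le tendsto_const_nhds hΔ0'
      (fun k => zero_le) hbound
  exact tendsto_ratio_of_compl hE (fun k => (vol_Gset_pos b hνp _ hr).ne')
    (fun k => vol_Gset_ne_top b hνp _ _) hczero

/-! ### rho under powers, and rigidity -/

lemma rho_rpow (b : OrthonormalBasis (Fin d) ℝ Ed) {ν : Fin d → ℝ}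
    (hν : ∀ i, 1 < ν i) {t : ℝ} (ht : 0 < t) {v : Ed} (hv : v ≠ 0) :
    rho b (fun i => ν i ^ t) v = rho b ν v ^ t := by
  obtain ⟨i₀, hne₀, heq₀⟩ := exists_rho_eq b ν hv
  obtain ⟨i₁, hne₁, heq₁⟩ := exists_rho_eq b (fun i => ν i ^ t) hv
  apply le_antisymm
  · have h1 : rho b (fun i => ν i ^ t) v ≤ ν i₀ ^ t := rho_le b _ hne₀
    rwa [heq₀] at h1
  · rw [← heq₁]
    apply Real.rpow_le_rpow (lt_trans one_pos (one_lt_rho b hν hv)).le _ ht.le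
    exact rho_le b ν hne₁

lemma Tmap_expand (b : OrthonormalBasis (Fin d) ℝ Ed) (κ : Fin d → ℝ) (x : Ed) :
    Tmap b κ x = ∑ i, (κ i * b.repr x i) • b i := by
  conv_lhs => rw [← b.sum_repr (Tmap b κ x)]
  exact Finset.sum_congr rfl fun i _ => by rw [repr_Tmap]

lemma ob_ne_zero (b : OrthonormalBasis (Fin d) ℝ Ed) (i : Fin d) : b i ≠ 0 := by
  have := b.toBasis.ne_zero i
  rwa [b.coe_toBasis] at this

theorem Tmap_eq_of_rho_eq (b₁ b₂ : OrthonormalBasis (Fin d) ℝ Ed) {κ₁ κ₂ : Fin d → ℝ}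
    (hρ : ∀ v : Ed, v ≠ 0 → rho b₁ κ₁ v = rho b₂ κ₂ v) :
    Tmap b₁ κ₁ = Tmap b₂ κ₂ := by
  have hmatch : ∀ i j, b₂.repr (b₁ i) j ≠ 0 → κ₁ i = κ₂ j := by
    intro i j hne
    have hne' : b₁.repr (b₂ j) i ≠ 0 := by
      rw [b₁.repr_apply_apply]
      rw [b₂.repr_apply_apply] at hne
      rwa [real_inner_comm] at hne
    have h1 : rho b₂ κ₂ (b₁ i) ≤ κ₂ j := rho_le b₂ κ₂ hne
    rw [← hρ (b₁ i) (ob_ne_zero b₁ i), rho_basis] at h1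
    have h2 : rho b₁ κ₁ (b₂ j) ≤ κ₁ i := rho_le b₁ κ₁ hne'
    rw [hρ (b₂ j) (ob_ne_zero b₂ j), rho_basis] at h2
    exact le_antisymm h1 h2
  refine Module.Basis.ext b₁.toBasis fun i => ?_
  rw [b₁.coe_toBasis, Tmap_basis, Tmap_expand]
  have hterm : ∀ j, (κ₂ j * b₂.repr (b₁ i) j) • b₂ j =
      κ₁ i • (b₂.repr (b₁ i) j • b₂ j) := by
    intro j
    rcases eq_or_ne (b₂.repr (b₁ i) j) 0 with hz | hz
    · simp [hz]
    · rw [smul_smul, hmatch i j hz]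
  rw [Finset.sum_congr rfl fun j _ => hterm j, ← Finset.smul_sum, b₂.sum_repr]

lemma Tmap_npow (b : OrthonormalBasis (Fin d) ℝ Ed) (κ : Fin d → ℝ) (k : ℕ) :
    ((Tmap b κ : Ed →ₗ[ℝ] Ed) ^ k) = Tmap b (fun i => κ i ^ k) := by
  induction k with
  | zero =>
    refine LinearMap.ext fun x => ?_
    rw [pow_zero]
    have h2 : (fun i : Fin d => κ i ^ (0:ℕ)) = fun _ : Fin d => (1:ℝ) := by
      funext i; rw [pow_zero]
    rw [h2]
    exact (Tmap_one b x).symm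
  | succ n ih =>
    refine LinearMap.ext fun x => ?_
    rw [pow_succ, Module.End.mul_apply, ih, Tmap_comp]
    have hfn : (fun i => κ i ^ n * κ i) = fun i => κ i ^ (n + 1) := by
      funext i; rw [pow_succ]
    rw [hfn]


/-! ### forward step -/

theorem rho_ratio_step (A₁ A₂ : Ed →ₗ[ℝ] Ed)
    (hsym₁ : A₁.IsSymmetric) (hsym₂ : A₂.IsSymmetric)
    (hexp₁ : IsExpansive A₁) (hexp₂ : IsExpansive A₂)
    (h𝓔 : densityFamily A₁ = densityFamily A₂)
    {u v : Ed} (hu : u ≠ 0) (hv : v ≠ 0) {γ : ℝ} (hγ : 0 < γ)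
    (hlt : rho (eb A₁ hsym₁) (nu A₁ hsym₁) u ^ γ < rho (eb A₁ hsym₁) (nu A₁ hsym₁) v) :
    rho (eb A₂ hsym₂) (nu A₂ hsym₂) u ^ γ ≤ rho (eb A₂ hsym₂) (nu A₂ hsym₂) v := by
  by_contra hcon
  push_neg at hcon
  have hν₁ : ∀ i, 1 < nu A₁ hsym₁ i := one_lt_nu A₁ hsym₁ hexp₁
  have hν₂ : ∀ i, 1 < nu A₂ hsym₂ i := one_lt_nu A₂ hsym₂ hexp₂
  have hE1 : {x : Ed | |⟪x, v⟫| ≤ |⟪x, u⟫| ^ γ} ∈ densityFamily A₁ := by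
    refine ⟨measurable_testSet u v hγ, fun r hr => ?_⟩
    refine (core_pos (eb A₁ hsym₁) hν₁ hu hv hγ hlt hr).congr fun j => ?_
    rw [preimage_pow_ball A₁ hsym₁ j r]
  rw [h𝓔] at hE1
  have hd2 := hE1.2 1 one_pos
  apply core_neg (eb A₂ hsym₂) hν₂ hu hv hγ hcon
  refine hd2.congr fun j => ?_
  rw [preimage_pow_ball A₂ hsym₂ j 1]

end Stmt16

open Stmt16

theorem stmt_16 {d : ℕ} (hd : 1 ≤ d)
    (A₁ A₂ : EuclideanSpace ℝ (Fin d) →ₗ[ℝ] EuclideanSpace ℝ (Fin d))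
    (hsym₁ : LinearMap.IsSymmetric A₁) (hsym₂ : LinearMap.IsSymmetric A₂)
    (hexp₁ : IsExpansive A₁) (hexp₂ : IsExpansive A₂)
    (C₁ C₂ : EuclideanSpace ℝ (Fin d) ≃ₗ[ℝ] EuclideanSpace ℝ (Fin d))
    (lam₁ lam₂ : Fin d → ℝ)
    -- `A_μ = C_μ J_μ C_μ⁻¹`, with `J_μ` the diagonal map with entries `lam_μ i`
    (hA₁ : ∀ (x : EuclideanSpace ℝ (Fin d)) (i : Fin d),
      (C₁.symm (A₁ x)) i = lam₁ i * (C₁.symm x) i)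
    (hA₂ : ∀ (x : EuclideanSpace ℝ (Fin d)) (i : Fin d),
      (C₂.symm (A₂ x)) i = lam₂ i * (C₂.symm x) i) :
    densityFamily A₁ = densityFamily A₂ ↔
      -- `(A′₁)ᵗ = A′₂`, where `A′_μ = C_μ J′_μ C_μ⁻¹` has the same diagonalization with the
      -- absolute values `|lam_μ i|` on the diagonal, and the power acts on the diagonal entries
      ∃ t : ℝ, 0 < t ∧ ∀ x : EuclideanSpace ℝ (Fin d),
        C₁ ((WithLp.equiv 2 (Fin d → ℝ)).symm fun i => |lam₁ i| ^ t * (C₁.symm x) i) =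
        C₂ ((WithLp.equiv 2 (Fin d → ℝ)).symm fun i => |lam₂ i| * (C₂.symm x) i) := by
  set b₁ := eb A₁ hsym₁ with hb₁
  set b₂ := eb A₂ hsym₂ with hb₂
  set ν₁ := nu A₁ hsym₁ with hν₁def
  set ν₂ := nu A₂ hsym₂ with hν₂def
  have hν₁ : ∀ i, 1 < ν₁ i := one_lt_nu A₁ hsym₁ hexp₁
  have hν₂ : ∀ i, 1 < ν₂ i := one_lt_nu A₂ hsym₂ hexp₂
  have hν₁p : ∀ i, 0 < ν₁ i := fun i => lt_trans one_pos (hν₁ i)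
  constructor
  · intro h𝓔
    -- cross inequality on logarithms
    have cross : ∀ (u v : EuclideanSpace ℝ (Fin d)), u ≠ 0 → v ≠ 0 →
        Real.log (rho b₁ ν₁ v) * Real.log (rho b₂ ν₂ u) ≤
        Real.log (rho b₂ ν₂ v) * Real.log (rho b₁ ν₁ u) := by
      intro u v hu hv
      by_contra hcon
      push_neg at hcon
      have ha₁ : 0 < Real.log (rho b₁ ν₁ u) := Real.log_pos (one_lt_rho b₁ hν₁ hu)
      have hb₁v : 0 < Real.log (rho b₁ ν₁ v) := Real.log_pos (one_lt_rho b₁ hν₁ hv)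
      have ha₂ : 0 < Real.log (rho b₂ ν₂ u) := Real.log_pos (one_lt_rho b₂ hν₂ hu)
      have hb₂v : 0 < Real.log (rho b₂ ν₂ v) := Real.log_pos (one_lt_rho b₂ hν₂ hv)
      have hdiv : Real.log (rho b₂ ν₂ v) / Real.log (rho b₂ ν₂ u) <
          Real.log (rho b₁ ν₁ v) / Real.log (rho b₁ ν₁ u) :=
        (div_lt_div_iff₀ ha₂ ha₁).mpr (by linarith)
      obtain ⟨γ, hγ1, hγ2⟩ := exists_between hdiv
      have hγ0 : 0 < γ := lt_trans (div_pos hb₂v ha₂) hγ1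
      have hρ₁u0 : (0:ℝ) < rho b₁ ν₁ u := lt_trans one_pos (one_lt_rho b₁ hν₁ hu)
      have hρ₁v0 : (0:ℝ) < rho b₁ ν₁ v := lt_trans one_pos (one_lt_rho b₁ hν₁ hv)
      have hρ₂u0 : (0:ℝ) < rho b₂ ν₂ u := lt_trans one_pos (one_lt_rho b₂ hν₂ hu)
      have hρ₂v0 : (0:ℝ) < rho b₂ ν₂ v := lt_trans one_pos (one_lt_rho b₂ hν₂ hv)
      have hrholt : rho b₁ ν₁ u ^ γ < rho b₁ ν₁ v := by
        have h1 : γ * Real.log (rho b₁ ν₁ u) < Real.log (rho b₁ ν₁ v) :=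
          (lt_div_iff₀ ha₁).mp hγ2
        rw [Real.rpow_def_of_pos hρ₁u0, ← Real.exp_log hρ₁v0]
        exact Real.exp_lt_exp.mpr (by linarith)
      have hle := rho_ratio_step A₁ A₂ hsym₁ hsym₂ hexp₁ hexp₂ h𝓔 hu hv hγ0 hrholt
      have hgt : rho b₂ ν₂ v < rho b₂ ν₂ u ^ γ := by
        have h1 : Real.log (rho b₂ ν₂ v) < γ * Real.log (rho b₂ ν₂ u) :=
          (div_lt_iff₀ ha₂).mp hγ1
        rw [Real.rpow_def_of_pos hρ₂u0, ← Real.exp_log hρ₂v0]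
        exact Real.exp_lt_exp.mpr (by linarith)
      exact absurd hle (not_le.mpr hgt)
    -- the scaling factor t
    have hu₀ : (b₁ ⟨0, hd⟩ : EuclideanSpace ℝ (Fin d)) ≠ 0 := ob_ne_zero b₁ _
    set t : ℝ := Real.log (rho b₂ ν₂ (b₁ ⟨0, hd⟩)) / Real.log (rho b₁ ν₁ (b₁ ⟨0, hd⟩))
      with htdef
    have hl₁ : 0 < Real.log (rho b₁ ν₁ (b₁ ⟨0, hd⟩)) := Real.log_pos (one_lt_rho b₁ hν₁ hu₀)
    have hl₂ : 0 < Real.log (rho b₂ ν₂ (b₁ ⟨0, hd⟩)) := Real.log_pos (one_lt_rho b₂ hν₂ hu₀)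
    have ht : 0 < t := div_pos hl₂ hl₁
    have hρt : ∀ v : EuclideanSpace ℝ (Fin d), v ≠ 0 → rho b₂ ν₂ v = rho b₁ ν₁ v ^ t := by
      intro v hv
      have h1 := cross (b₁ ⟨0, hd⟩) v hu₀ hv
      have h2 := cross v (b₁ ⟨0, hd⟩) hv hu₀
      have heq : Real.log (rho b₁ ν₁ v) * Real.log (rho b₂ ν₂ (b₁ ⟨0, hd⟩)) =
          Real.log (rho b₂ ν₂ v) * Real.log (rho b₁ ν₁ (b₁ ⟨0, hd⟩)) := le_antisymm h1 (by linarith)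
      have hρ₁v0 : (0:ℝ) < rho b₁ ν₁ v := lt_trans one_pos (one_lt_rho b₁ hν₁ hv)
      have hρ₂v0 : (0:ℝ) < rho b₂ ν₂ v := lt_trans one_pos (one_lt_rho b₂ hν₂ hv)
      have hlog : Real.log (rho b₂ ν₂ v) = Real.log (rho b₁ ν₁ v) * t := by
        rw [htdef]
        field_simp
        linarith [heq]
      rw [Real.rpow_def_of_pos hρ₁v0, ← hlog, Real.exp_log hρ₂v0]
    have hTeq : Tmap b₁ (fun i => ν₁ i ^ t) = Tmap b₂ ν₂ := by
      apply Tmap_eq_of_rho_eq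
      intro v hv
      rw [rho_rpow b₁ hν₁ ht hv, ← hρt v hv]
    refine ⟨t, ht, fun x => ?_⟩
    rw [conv_eq_Tmap A₁ hsym₁ C₁ lam₁ hA₁ (fun z => |z| ^ t) x,
      conv_eq_Tmap A₂ hsym₂ C₂ lam₂ hA₂ (fun z => |z|) x]
    exact LinearMap.congr_fun hTeq x
  · rintro ⟨t, ht, hmap⟩
    have hTeq : Tmap b₁ (fun i => ν₁ i ^ t) = Tmap b₂ ν₂ := by
      refine LinearMap.ext fun x => ?_
      have h1 := conv_eq_Tmap A₁ hsym₁ C₁ lam₁ hA₁ (fun z => |z| ^ t) x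
      have h2 := conv_eq_Tmap A₂ hsym₂ C₂ lam₂ hA₂ (fun z => |z|) x
      exact h1.symm.trans ((hmap x).trans h2)
    have hsetEq : ∀ (k : ℕ) (r : ℝ), Gset b₂ ν₂ (k:ℝ) r = Gset b₁ ν₁ (t * (k:ℝ)) r := by
      intro k r
      have hmapeq : Tpow b₂ ν₂ (k:ℝ) = Tpow b₁ ν₁ (t * (k:ℝ)) := by
        rw [Tpow, Tpow]
        have e1 : (fun i => ν₂ i ^ ((k:ℕ):ℝ)) = fun i => ν₂ i ^ (k:ℕ) := by
          funext i; rw [Real.rpow_natCast]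
        have e2 : (fun i => ν₁ i ^ (t * (k:ℝ))) = fun i => (ν₁ i ^ t) ^ (k:ℕ) := by
          funext i
          rw [← Real.rpow_natCast (ν₁ i ^ t) k, ← Real.rpow_mul (hν₁p i).le]
        rw [e1, e2, ← Tmap_npow, ← Tmap_npow, hTeq]
      rw [Gset, Gset, hmapeq]
    ext E
    constructor
    · rintro ⟨hE, hdens⟩
      refine ⟨hE, fun r hr => ?_⟩
      have hσ : Tendsto (fun j : ℕ =>
          volume (E ∩ Gset b₁ ν₁ (j:ℝ) r) / volume (Gset b₁ ν₁ (j:ℝ) r)) atTop (𝓝 1) := by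
        refine (hdens r hr).congr fun j => ?_
        rw [preimage_pow_ball A₁ hsym₁ j r]
      have hfl : Tendsto (fun k : ℕ => ⌊t * (k:ℝ)⌋₊) atTop atTop :=
        tendsto_nat_floor_atTop.comp (tendsto_natCast_atTop_atTop.const_mul_atTop ht)
      have htr := transfer b₁ hν₁ hE (fun j => (j:ℝ)) (fun k => t * (k:ℝ))
        (fun k => ⌊t * (k:ℝ)⌋₊) hfl
        (fun k => by
          show ((⌊t * (k:ℝ)⌋₊ : ℕ) : ℝ) ≤ t * (k:ℝ)
          exact Nat.floor_le (by positivity))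
        (Cb := 1) (fun k => by
          show t * (k:ℝ) - ((⌊t * (k:ℝ)⌋₊ : ℕ) : ℝ) ≤ 1
          have := Nat.lt_floor_add_one (t * (k:ℝ))
          linarith)
        hr hσ
      refine htr.congr fun k => ?_
      rw [preimage_pow_ball A₂ hsym₂ k r, hsetEq k r]
    · rintro ⟨hE, hdens⟩
      refine ⟨hE, fun r hr => ?_⟩
      have hσ : Tendsto (fun k : ℕ =>
          volume (E ∩ Gset b₁ ν₁ (t * (k:ℝ)) r) / volume (Gset b₁ ν₁ (t * (k:ℝ)) r))
          atTop (𝓝 1) := by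
        refine (hdens r hr).congr fun k => ?_
        rw [preimage_pow_ball A₂ hsym₂ k r, hsetEq k r]
      have hfl : Tendsto (fun j : ℕ => ⌊(j:ℝ) / t⌋₊) atTop atTop :=
        tendsto_nat_floor_atTop.comp (tendsto_natCast_atTop_atTop.atTop_div_const ht)
      have htr := transfer b₁ hν₁ hE (fun k => t * (k:ℝ)) (fun j => (j:ℝ))
        (fun j => ⌊(j:ℝ) / t⌋₊) hfl
        (fun j => by
          show t * ((⌊(j:ℝ) / t⌋₊ : ℕ) : ℝ) ≤ (j:ℝ)
          have h1 : (⌊(j:ℝ) / t⌋₊ : ℝ) ≤ (j:ℝ) / t := Nat.floor_le (by positivity)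
          calc t * (⌊(j:ℝ) / t⌋₊ : ℝ) ≤ t * ((j:ℝ) / t) :=
                mul_le_mul_of_nonneg_left h1 ht.le
            _ = (j:ℝ) := by field_simp)
        (Cb := t) (fun j => by
          show (j:ℝ) - t * ((⌊(j:ℝ) / t⌋₊ : ℕ) : ℝ) ≤ t
          have h1 : (j:ℝ) / t < ⌊(j:ℝ) / t⌋₊ + 1 := Nat.lt_floor_add_one _
          have h2 : (j:ℝ) < t * (⌊(j:ℝ) / t⌋₊ : ℝ) + t := by
            have := mul_lt_mul_of_pos_left h1 ht
            calc (j:ℝ) = t * ((j:ℝ) / t) := by field_simp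
              _ < t * ((⌊(j:ℝ) / t⌋₊ : ℝ) + 1) := mul_lt_mul_of_pos_left h1 ht
              _ = t * (⌊(j:ℝ) / t⌋₊ : ℝ) + t := by ring
          linarith)
        hr hσ
      refine htr.congr fun j => ?_
      rw [preimage_pow_ball A₁ hsym₁ j r]
end
end

section
/- Assume the Four Exponentials Conjecture: whenever x₁, x₂ are ℚ-linearly independent complex numbers and y₁, y₂ are ℚ-linearly independent complex numbers, at least one of the four numbers exp(x_i y_j) (i, j ∈ {1, 2}) is transcendental. Then for natural numbers a, b ≥ 2 and a real number t > 0, if all four of a, b, a^t, b^t are integers, then either t ∈ ℚ, or log a and log b are linearly dependent over ℚ (i.e. b = a^{k/m} for some positive integers k, m). -/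
/-!
Apply the four exponentials conjecture to `x = (log a, log b)` and `y = (1, t)`: the four
exponentials are `a, a^t, b, b^t`, all integers and hence algebraic, so either `1, t` or
`log a, log b` are ℚ-linearly dependent. The first means `t ∈ ℚ`; the second gives
`log b = q log a` with `q > 0` rational, i.e. `b = a^q`.
-/

open Real

lemma linearIndependent_pair_ofReal {x y : ℝ} (h : LinearIndependent ℚ ![x, y]) :
    LinearIndependent ℚ ![(x : ℂ), (y : ℂ)] := by
  rw [LinearIndependent.pair_iff] at h ⊢
  exact fun s t hst => h s t (by exact_mod_cast hst)

lemma linearIndependent_one_of_irrational {x : ℝ} (hx : Irrational x) :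
    LinearIndependent ℚ ![1, x] :=
  (LinearIndependent.pair_iff' one_ne_zero).mpr fun q hq => hx ⟨q, by simpa using hq⟩

lemma exists_rpow_natCast_div_eq_of_not_linearIndependent_log {a b : ℝ} (ha : 1 < a)
    (hb : 1 < b) (h : ¬ LinearIndependent ℚ ![log a, log b]) :
    ∃ k m : ℕ, 0 < k ∧ 0 < m ∧ b = a ^ ((k : ℝ) / m) := by
  rw [LinearIndependent.pair_iff' (log_pos ha).ne'] at h
  simp only [not_forall, not_not] at h
  obtain ⟨q, hq⟩ := h
  rw [Rat.smul_def] at hq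
  have hq_pos : 0 < q := by
    have : (0 : ℝ) < q := pos_of_mul_pos_left (hq ▸ log_pos hb) (log_pos ha).le
    exact_mod_cast this
  have hnum_pos : 0 < q.num := Rat.num_pos.mpr hq_pos
  refine ⟨q.num.natAbs, q.den, Int.natAbs_pos.mpr hnum_pos.ne', q.pos, ?_⟩
  have hcast : ((q.num.natAbs : ℝ) / q.den) = q := by
    rw [Nat.cast_natAbs, Int.cast_abs, abs_of_pos (by exact_mod_cast hnum_pos), Rat.cast_def]
  rw [hcast, rpow_def_of_pos (by linarith), mul_comm, hq, exp_log (by linarith)]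

lemma isAlgebraic_exp_log_mul {a t : ℝ} (ha : 0 < a) (h : ∃ m : ℤ, a ^ t = m) :
    IsAlgebraic ℚ (Complex.exp (log a * t)) := by
  obtain ⟨m, hm⟩ := h
  rw [← Complex.ofReal_mul, ← Complex.ofReal_exp, ← rpow_def_of_pos ha, hm,
    Complex.ofReal_intCast]
  exact isAlgebraic_intCast m

theorem stmt_18_general
    (fourExp : ∀ x₁ x₂ y₁ y₂ : ℂ, LinearIndependent ℚ ![x₁, x₂] →
      LinearIndependent ℚ ![y₁, y₂] →
      Transcendental ℚ (Complex.exp (x₁ * y₁)) ∨ Transcendental ℚ (Complex.exp (x₁ * y₂)) ∨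
      Transcendental ℚ (Complex.exp (x₂ * y₁)) ∨ Transcendental ℚ (Complex.exp (x₂ * y₂)))
    (a b : ℕ) (ha : 2 ≤ a) (hb : 2 ≤ b) (t : ℝ)
    (hat : ∃ m : ℤ, (a : ℝ) ^ t = (m : ℝ)) (hbt : ∃ n : ℤ, (b : ℝ) ^ t = (n : ℝ)) :
    (∃ q : ℚ, t = (q : ℝ)) ∨
      ∃ k m : ℕ, 0 < k ∧ 0 < m ∧ (b : ℝ) = (a : ℝ) ^ ((k : ℝ) / (m : ℝ)) := by
  refine or_iff_not_imp_left.mpr fun hrat => by_contra fun hdep => ?_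
  have ha1 : (1 : ℝ) < a := by exact_mod_cast ha
  have hb1 : (1 : ℝ) < b := by exact_mod_cast hb
  have hlog : LinearIndependent ℚ ![log a, log b] := by_contra fun h =>
    hdep (exists_rpow_natCast_div_eq_of_not_linearIndependent_log ha1 hb1 h)
  have hirr : Irrational t := fun ⟨q, hq⟩ => hrat ⟨q, hq.symm⟩
  have hint : ∀ c : ℕ, ∃ m : ℤ, (c : ℝ) ^ (1 : ℝ) = m := fun c => ⟨c, by simp⟩
  rcases fourExp _ _ _ _ (linearIndependent_pair_ofReal hlog)
      (linearIndependent_pair_ofReal (linearIndependent_one_of_irrational hirr))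
    with h | h | h | h
  · exact h (isAlgebraic_exp_log_mul (by positivity) (hint a))
  · exact h (isAlgebraic_exp_log_mul (by positivity) hat)
  · exact h (isAlgebraic_exp_log_mul (by positivity) (hint b))
  · exact h (isAlgebraic_exp_log_mul (by positivity) hbt)

theorem stmt_18
    (fourExp : ∀ x₁ x₂ y₁ y₂ : ℂ, LinearIndependent ℚ ![x₁, x₂] →
      LinearIndependent ℚ ![y₁, y₂] →
      Transcendental ℚ (Complex.exp (x₁ * y₁)) ∨ Transcendental ℚ (Complex.exp (x₁ * y₂)) ∨
      Transcendental ℚ (Complex.exp (x₂ * y₁)) ∨ Transcendental ℚ (Complex.exp (x₂ * y₂)))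
    (a b : ℕ) (ha : 2 ≤ a) (hb : 2 ≤ b) (t : ℝ) (ht : 0 < t)
    (hat : ∃ m : ℤ, (a : ℝ) ^ t = (m : ℝ)) (hbt : ∃ n : ℤ, (b : ℝ) ^ t = (n : ℝ)) :
    (∃ q : ℚ, t = (q : ℝ)) ∨
      ∃ k m : ℕ, 0 < k ∧ 0 < m ∧ (b : ℝ) = (a : ℝ) ^ ((k : ℝ) / (m : ℝ)) :=
  stmt_18_general fourExp a b ha hb t hat hbt
end
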